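/- arXiv:1507.08327 — 5 statements merged into one kernel-verified Lean document; each statement's English description precedes it below -/
import Mathlib

section
/- Let 0 < p ≤ q ≤ ∞, let (X,μ) and (Y,ν) be σ-finite measure spaces, and let f be a nonnegative measurable function on X × Y. Then (∫_Y (∫_X f(x,y)^p dμ(x))^{q/p} dν(y))^{1/q} ≤ (∫_X (∫_Y f(x,y)^q dν(y))^{p/q} dμ(x))^{1/p}, with the convention that an exponent ∞ is interpreted as the essential supremum in that variable. (Two-variable Minkowski integral inequality: taking the smaller exponent in the inner integral gives the smaller mixed norm.) -/
open MeasureTheory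
open scoped ENNReal

/-- The `L^p` "norm" (for `0 < p ≤ ∞`) of a nonnegative measurable function,
with the convention that an exponent `∞` is interpreted as the essential supremum. -/
noncomputable def eNorm {α : Type*} [MeasurableSpace α] (μ : Measure α) (p : ℝ≥0∞)
    (g : α → ℝ≥0∞) : ℝ≥0∞ :=
  if p = ∞ then essSup g μ else (∫⁻ a, g a ^ p.toReal ∂μ) ^ (1 / p.toReal)

/-!
For `q < ∞` put `r = q / p ≥ 1` and `g = f ^ p`: the claim is Minkowski's integral inequality
`‖∫ g(x, ·) dμ(x)‖_{L^r(ν)} ≤ ∫ ‖g(x, ·)‖_{L^r(ν)} dμ(x)`, raised to the power `1 / p`.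
For `r > 1` and `Ψ ≤ ∫ g dμ`, Tonelli and Hölder in `y` give
`∫ Ψ^r ≤ ∫∫ g Ψ^(r-1) ≤ (∫ ‖g(x, ·)‖_r dμ) (∫ Ψ^r)^(1 - 1/r)`, which can be cancelled when
`∫ Ψ^r < ∞`; truncating `∫ g dμ` to `min (∫ g dμ) n` on the spanning sets of `ν` and letting
`n → ∞` removes the finiteness assumption.
For `q = ∞`, Tonelli gives `f(x, y) ≤ ess sup f(x, ·)` for a.e. `y` and a.e. `x`, and the `L^p(μ)`
norm is monotone.
-/

open Set Filter

theorem ENNReal.rpow_one_div_le_of_le_mul_rpow {r s : ℝ} (hrs : r.HolderConjugate s)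
    {J R : ℝ≥0∞} (hJ : J ≠ ∞) (h : J ≤ R * J ^ (1 / s)) : J ^ (1 / r) ≤ R := by
  rcases eq_or_ne J 0 with rfl | hJ0
  · rw [ENNReal.zero_rpow_of_pos hrs.one_div_pos]
    exact zero_le
  have hJs0 : J ^ (1 / s) ≠ 0 := (ENNReal.rpow_pos (pos_iff_ne_zero.mpr hJ0) hJ).ne'
  have hJs : J ^ (1 / s) ≠ ∞ := ENNReal.rpow_ne_top_of_nonneg hrs.symm.one_div_nonneg hJ
  rwa [← ENNReal.mul_le_mul_iff_left hJs0 hJs, ← ENNReal.rpow_add _ _ hJ0 hJ,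
    hrs.one_div_add_one_div, one_div_one, ENNReal.rpow_one]

section Truncation

variable {Y : Type*} [MeasurableSpace Y]

noncomputable def spanningTrunc (ν : Measure Y) [SigmaFinite ν] (Φ : Y → ℝ≥0∞) (n : ℕ) :
    Y → ℝ≥0∞ :=
  (spanningSets ν n).indicator fun y => min (Φ y) n

variable {ν : Measure Y} [SigmaFinite ν] {Φ : Y → ℝ≥0∞}

theorem measurable_spanningTrunc (hΦ : Measurable Φ) (n : ℕ) :
    Measurable (spanningTrunc ν Φ n) :=
  (hΦ.min measurable_const).indicator (measurableSet_spanningSets ν n)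

theorem spanningTrunc_le (n : ℕ) (y : Y) : spanningTrunc ν Φ n y ≤ Φ y :=
  indicator_le (fun _ _ => min_le_left _ _) y

theorem monotone_spanningTrunc : Monotone (spanningTrunc ν Φ) := fun _ _ hmn y =>
  indicator_le_indicator_of_subset (monotone_spanningSets ν hmn) (fun _ => zero_le) y |>.trans
    (indicator_le_indicator (min_le_min le_rfl (Nat.cast_le.mpr hmn)))

theorem iSup_spanningTrunc (y : Y) : ⨆ n, spanningTrunc ν Φ n y = Φ y := by
  refine le_antisymm (iSup_le fun n => spanningTrunc_le n y) ?_
  obtain ⟨N, hN⟩ := mem_iUnion.mp (iUnion_spanningSets ν ▸ mem_univ y)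
  calc Φ y = ⨆ n : ℕ, min (Φ y) n := by
        rw [← inf_iSup_eq, ENNReal.iSup_natCast, inf_top_eq]
    _ ≤ ⨆ n, spanningTrunc ν Φ n y := iSup_le fun n => by
        refine le_iSup_of_le (n + N) ?_
        rw [spanningTrunc, indicator_of_mem (monotone_spanningSets ν (Nat.le_add_left N n) hN)]
        exact min_le_min le_rfl (Nat.cast_le.mpr (Nat.le_add_right n N))

theorem lintegral_spanningTrunc_rpow_ne_top {r : ℝ} (hr : 0 < r) (n : ℕ) :
    ∫⁻ y, spanningTrunc ν Φ n y ^ r ∂ν ≠ ∞ := by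
  have hbound : ∀ y, spanningTrunc ν Φ n y ^ r
      ≤ (spanningSets ν n).indicator (fun _ => (n : ℝ≥0∞) ^ r) y := fun y => by
    by_cases hy : y ∈ spanningSets ν n
    · simp only [spanningTrunc, indicator_of_mem hy]
      exact ENNReal.rpow_le_rpow (min_le_right _ _) hr.le
    · simp [spanningTrunc, indicator_of_notMem hy, ENNReal.zero_rpow_of_pos hr]
  refine ne_of_lt <| calc
    ∫⁻ y, spanningTrunc ν Φ n y ^ r ∂ν
      ≤ ∫⁻ y, (spanningSets ν n).indicator (fun _ => (n : ℝ≥0∞) ^ r) y ∂ν := lintegral_mono hbound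
    _ = (n : ℝ≥0∞) ^ r * ν (spanningSets ν n) :=
      lintegral_indicator_const (measurableSet_spanningSets ν n) _
    _ < ∞ := ENNReal.mul_lt_top (ENNReal.rpow_lt_top_of_nonneg hr.le (ENNReal.natCast_ne_top n))
      (measure_spanningSets_lt_top ν n)

end Truncation

section Minkowski

variable {X Y : Type*} [MeasurableSpace X] [MeasurableSpace Y] {μ : Measure X} {ν : Measure Y}
  [SFinite μ] {r : ℝ} {g : X × Y → ℝ≥0∞}

theorem lintegral_Lp_le_lintegral_Lp_of_le_lintegral [SFinite ν] (hr : 1 < r) (hg : Measurable g)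
    {Ψ : Y → ℝ≥0∞} (hΨ : Measurable Ψ) (hΨg : ∀ y, Ψ y ≤ ∫⁻ x, g (x, y) ∂μ)
    (hΨr : ∫⁻ y, Ψ y ^ r ∂ν ≠ ∞) :
    (∫⁻ y, Ψ y ^ r ∂ν) ^ (1 / r) ≤ ∫⁻ x, (∫⁻ y, g (x, y) ^ r ∂ν) ^ (1 / r) ∂μ := by
  have hrs : r.HolderConjugate (r / (r - 1)) := .conjExponent hr
  refine ENNReal.rpow_one_div_le_of_le_mul_rpow hrs hΨr ?_
  calc ∫⁻ y, Ψ y ^ r ∂ν = ∫⁻ y, Ψ y * Ψ y ^ (r - 1) ∂ν := by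
        congr! 2 with y
        conv_lhs => rw [← add_sub_cancel 1 r]
        rw [ENNReal.rpow_add_of_nonneg _ _ zero_le_one (sub_nonneg.2 hr.le), ENNReal.rpow_one]
    _ ≤ ∫⁻ y, ∫⁻ x, g (x, y) * Ψ y ^ (r - 1) ∂μ ∂ν := lintegral_mono fun y =>
        (mul_le_mul_left (hΨg y) _).trans_eq
          (lintegral_mul_const _ (hg.comp measurable_prodMk_right)).symm
    _ = ∫⁻ x, ∫⁻ y, g (x, y) * Ψ y ^ (r - 1) ∂ν ∂μ :=
        lintegral_lintegral_swap
          ((hg.comp measurable_swap).mul ((hΨ.pow_const _).comp measurable_fst)).aemeasurable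
    _ ≤ ∫⁻ x, (∫⁻ y, g (x, y) ^ r ∂ν) ^ (1 / r) * (∫⁻ y, Ψ y ^ r ∂ν) ^ (1 / (r / (r - 1))) ∂μ :=
        lintegral_mono fun x => ENNReal.lintegral_mul_rpow_le_lintegral_rpow_mul_lintegral_rpow hrs
          (hg.comp measurable_prodMk_left).aemeasurable hΨ.aemeasurable
    _ = _ := lintegral_mul_const _ ((hg.pow_const r).lintegral_prod_right'.pow_const _)

theorem lintegral_Lp_lintegral_le_lintegral_Lp [SigmaFinite ν] (hr : 1 ≤ r) (hg : Measurable g) :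
    (∫⁻ y, (∫⁻ x, g (x, y) ∂μ) ^ r ∂ν) ^ (1 / r)
      ≤ ∫⁻ x, (∫⁻ y, g (x, y) ^ r ∂ν) ^ (1 / r) ∂μ := by
  rcases hr.eq_or_lt with rfl | hr
  · simpa using (lintegral_lintegral_swap (f := fun x y => g (x, y)) hg.aemeasurable).ge
  have hr0 : 0 < r := zero_lt_one.trans hr
  set Φ : Y → ℝ≥0∞ := fun y => ∫⁻ x, g (x, y) ∂μ
  have hΦ : Measurable Φ := hg.lintegral_prod_left'
  have hlim : ∫⁻ y, Φ y ^ r ∂ν = ⨆ n, ∫⁻ y, spanningTrunc ν Φ n y ^ r ∂ν := by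
    rw [← lintegral_iSup (fun n => (measurable_spanningTrunc hΦ n).pow_const r)
      fun _ _ hmn y => ENNReal.rpow_le_rpow (monotone_spanningTrunc hmn y) hr0.le]
    congr! 2 with y
    rw [← iSup_spanningTrunc (ν := ν) (Φ := Φ) y]
    exact (ENNReal.orderIsoRpow r hr0).map_iSup _
  rw [hlim, one_div, ENNReal.rpow_inv_le_iff hr0]
  refine iSup_le fun n => (ENNReal.rpow_inv_le_iff hr0).1 ?_
  simpa only [one_div] using lintegral_Lp_le_lintegral_Lp_of_le_lintegral hr hg
    (measurable_spanningTrunc hΦ n) (spanningTrunc_le n) (lintegral_spanningTrunc_rpow_ne_top hr0 n)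

theorem lintegral_Lq_Lp_le_Lp_Lq [SigmaFinite ν] {p q : ℝ} (hp : 0 < p) (hpq : p ≤ q)
    {f : X × Y → ℝ≥0∞} (hf : Measurable f) :
    (∫⁻ y, ((∫⁻ x, f (x, y) ^ p ∂μ) ^ (1 / p)) ^ q ∂ν) ^ (1 / q)
      ≤ (∫⁻ x, ((∫⁻ y, f (x, y) ^ q ∂ν) ^ (1 / q)) ^ p ∂μ) ^ (1 / p) := by
  have hq : 0 < q := hp.trans_le hpq
  have minkowski : (∫⁻ y, (∫⁻ x, f (x, y) ^ p ∂μ) ^ (q / p) ∂ν) ^ (1 / (q / p))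
      ≤ ∫⁻ x, (∫⁻ y, (f (x, y) ^ p) ^ (q / p) ∂ν) ^ (1 / (q / p)) ∂μ :=
    lintegral_Lp_lintegral_le_lintegral_Lp ((one_le_div hp).2 hpq) (hf.pow_const p)
  have e1 : 1 / p * q = q / p := by field_simp
  have e2 : 1 / (q / p) * (1 / p) = 1 / q := by field_simp
  have e3 : p * (q / p) = q := by field_simp
  have e4 : 1 / (q / p) = 1 / q * p := by field_simp
  calc _ = ((∫⁻ y, (∫⁻ x, f (x, y) ^ p ∂μ) ^ (q / p) ∂ν) ^ (1 / (q / p))) ^ (1 / p) := by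
        simp only [← ENNReal.rpow_mul, e1, e2]
    _ ≤ (∫⁻ x, (∫⁻ y, (f (x, y) ^ p) ^ (q / p) ∂ν) ^ (1 / (q / p)) ∂μ) ^ (1 / p) := by
        gcongr
    _ = _ := by
        simp only [← ENNReal.rpow_mul, e3, e4]

end Minkowski

section EssSup

variable {X Y : Type*} [MeasurableSpace X] [MeasurableSpace Y] {μ : Measure X} {ν : Measure Y}
  {f : X × Y → ℝ≥0∞}

theorem measurable_essSup_prodMk_left [SFinite ν] (hf : Measurable f) :
    Measurable fun x => essSup (fun y => f (x, y)) ν := by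
  refine measurable_of_Iic fun c => ?_
  have hpreimage : (fun x => essSup (fun y => f (x, y)) ν) ⁻¹' Iic c
      = (fun x => ν (Prod.mk x ⁻¹' {z | c < f z})) ⁻¹' {0} := by
    ext x
    simp only [mem_preimage, mem_Iic, mem_singleton_iff, preimage_ofPred_eq, ← not_le, ← ae_iff]
    exact ⟨fun h => (ENNReal.ae_le_essSup _).mono fun y hy => hy.trans h, essSup_le_of_ae_le c⟩
  rw [hpreimage]
  exact measurable_measure_prodMk_left (measurableSet_lt measurable_const hf)
    (measurableSet_singleton 0)

theorem ae_ae_le_essSup_prodMk_left [SFinite μ] [SFinite ν] (hf : Measurable f) :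
    ∀ᵐ y ∂ν, ∀ᵐ x ∂μ, f (x, y) ≤ essSup (fun y' => f (x, y')) ν :=
  (Measure.ae_ae_comm (p := fun x y => f (x, y) ≤ essSup (fun y' => f (x, y')) ν)
    (measurableSet_le hf ((measurable_essSup_prodMk_left hf).comp measurable_fst))).mp
    (Eventually.of_forall fun x => ENNReal.ae_le_essSup fun y => f (x, y))

end EssSup

section eNorm

variable {α : Type*} [MeasurableSpace α]

theorem eNorm_top (μ : Measure α) (g : α → ℝ≥0∞) :
    eNorm μ ∞ g = essSup g μ :=
  if_pos rfl

theorem eNorm_of_ne_top (μ : Measure α) {p : ℝ≥0∞} (hp : p ≠ ∞) (g : α → ℝ≥0∞) :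
    eNorm μ p g = (∫⁻ a, g a ^ p.toReal ∂μ) ^ (1 / p.toReal) :=
  if_neg hp

theorem eNorm_mono_ae {μ : Measure α} (p : ℝ≥0∞) {g h : α → ℝ≥0∞} (hgh : g ≤ᵐ[μ] h) :
    eNorm μ p g ≤ eNorm μ p h := by
  unfold eNorm
  split_ifs
  · exact essSup_mono_ae hgh
  · exact ENNReal.rpow_le_rpow
      (lintegral_mono_ae (hgh.mono fun a ha => ENNReal.rpow_le_rpow ha ENNReal.toReal_nonneg))
      (by positivity)

end eNorm

/-- Two-variable Minkowski integral inequality: for `0 < p ≤ q ≤ ∞`,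
`(∫_Y (∫_X f(x,y)^p dμ(x))^{q/p} dν(y))^{1/q}
  ≤ (∫_X (∫_Y f(x,y)^q dν(y))^{p/q} dμ(x))^{1/p}`,
with an exponent `∞` interpreted as the essential supremum in that variable. -/
theorem minkowski_two_variable {X Y : Type*} [MeasurableSpace X] [MeasurableSpace Y]
    (μ : Measure X) (ν : Measure Y) [SigmaFinite μ] [SigmaFinite ν]
    (p q : ℝ≥0∞) (hp : 0 < p) (hpq : p ≤ q)
    (f : X × Y → ℝ≥0∞) (hf : Measurable f) :
    eNorm ν q (fun y => eNorm μ p (fun x => f (x, y))) ≤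
      eNorm μ p (fun x => eNorm ν q (fun y => f (x, y))) := by
  rcases eq_or_ne q ∞ with rfl | hq
  · simp only [eNorm_top]
    refine essSup_le_of_ae_le _ ?_
    filter_upwards [ae_ae_le_essSup_prodMk_left (μ := μ) (ν := ν) hf] with y hy
    exact eNorm_mono_ae p hy
  have hp' : p ≠ ∞ := ne_top_of_le_ne_top hq hpq
  simp only [eNorm_of_ne_top _ hq, eNorm_of_ne_top _ hp']
  exact lintegral_Lq_Lp_le_Lp_Lq (μ := μ) (ν := ν) (ENNReal.toReal_pos hp.ne' hp')
    (ENNReal.toReal_mono hq hpq) hf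
end

section
/- Mixed-norm Minkowski integral inequality: let (X₁,μ₁),…,(Xₙ,μₙ) be σ-finite measure spaces with product (X,μ), let p₁,…,pₙ ∈ (0,∞], and let P be the double n-tuple pairing pⱼ with xⱼ. If a permutation σ of {1,…,n} raises P, then for every nonnegative measurable function f on X, ‖f‖_P ≤ ‖f‖_{P·σ}. Similarly, if a permutation ρ lowers P, then ‖f‖_{P·ρ} ≤ ‖f‖_P for every nonnegative measurable f on X. -/
/-!
Moving an entry `(xₖ, r)` in front of an adjacent entry `(xⱼ, q)` with `q ≤ r` can only increase
a mixed norm: this is Minkowski's integral inequality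
`‖‖F‖_{L^q_t}‖_{L^r_u} ≤ ‖‖F‖_{L^r_u}‖_{L^q_t}`. For `q < ∞` it is the inequality
`‖∫ G(·, t) dt‖_{L^s} ≤ ∫ ‖G(·, t)‖_{L^s} dt` for `G = F^q` and `s = r / q ≥ 1`, which follows
from Hölder's inequality against `(∫ G(·, t) dt)^{s-1}`; when an exponent is `∞` it is an
exchange of an essential supremum with an integral or with another essential supremum.
A permutation raising `P` is reached from the identity by bubble sort, each adjacent swap undoing
one reversed pair of indices, and the raising condition says that each such swap is of the above
kind. Lowering is raising for `P·ρ` and `ρ⁻¹`.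
-/

open MeasureTheory
open scoped ENNReal

/-- Take the `L^q` norm of `f` in the single variable `x_j`, with the convention that
an exponent `∞` is interpreted as the essential supremum in that variable. -/
noncomputable def normIn {n : ℕ} {X : Fin n → Type*} [∀ j, MeasurableSpace (X j)]
    (μ : ∀ j, Measure (X j)) (j : Fin n) (q : ℝ≥0∞)
    (f : (∀ k, X k) → ℝ≥0∞) : (∀ k, X k) → ℝ≥0∞ :=
  fun x =>
    if q = ∞ then essSup (fun t => f (Function.update x j t)) (μ j)
    else (∫⁻ t, f (Function.update x j t) ^ q.toReal ∂(μ j)) ^ (1 / q.toReal)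

/-- The mixed norm of `f` determined by a double `n`-tuple, given as the list of
(variable, exponent) pairs in the order of processing. -/
noncomputable def mixedNorm {n : ℕ} {X : Fin n → Type*} [∀ j, MeasurableSpace (X j)]
    (μ : ∀ j, Measure (X j)) (P : List (Fin n × ℝ≥0∞))
    (f : (∀ k, X k) → ℝ≥0∞) : ℝ≥0∞ :=
  ⨆ x, (P.foldl (fun g jq => normIn μ jq.1 jq.2 g) f) x

/-- A permutation `σ` *raises* the double `n`-tuple with exponents `p`
if `p i ≤ p j` whenever `i < j` and `σ⁻¹ j < σ⁻¹ i`. -/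
def Raises {n : ℕ} (p : Fin n → ℝ≥0∞) (σ : Equiv.Perm (Fin n)) : Prop :=
  ∀ i j : Fin n, i < j → σ⁻¹ j < σ⁻¹ i → p i ≤ p j

/-- A permutation `σ` *lowers* the double `n`-tuple with exponents `p`
if `p j ≤ p i` whenever `i < j` and `σ⁻¹ j < σ⁻¹ i`. -/
def Lowers {n : ℕ} (p : Fin n → ℝ≥0∞) (σ : Equiv.Perm (Fin n)) : Prop :=
  ∀ i j : Fin n, i < j → σ⁻¹ j < σ⁻¹ i → p j ≤ p i

open Filter Function Equiv

section EssSup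

variable {α β : Type*} [MeasurableSpace α] [MeasurableSpace β] {μ : Measure α} {ν : Measure β}

theorem essSup_le_iff_measure_lt_eq_zero {f : α → ℝ≥0∞} {a : ℝ≥0∞} :
    essSup f μ ≤ a ↔ μ {x | a < f x} = 0 := by
  refine ⟨fun h => measure_mono_null (fun x hx => h.trans_lt hx) (meas_essSup_lt (f := f)),
    fun h => essSup_le_of_ae_le a (ae_iff.2 ?_)⟩
  simpa only [not_le] using h

theorem Measurable.essSup_prod_right [SFinite ν] {h : α → β → ℝ≥0∞}
    (hh : Measurable (uncurry h)) : Measurable fun x => essSup (h x) ν := by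
  refine measurable_of_Iic fun a => ?_
  have hset : MeasurableSet {p : α × β | a < uncurry h p} := measurableSet_lt measurable_const hh
  convert (measurable_measure_prodMk_left (ν := ν) hset) (measurableSet_singleton 0) using 1
  ext x
  exact essSup_le_iff_measure_lt_eq_zero

theorem essSup_essSup_le [SFinite μ] [SFinite ν] {h : α → β → ℝ≥0∞}
    (hh : Measurable (uncurry h)) :
    essSup (fun x => essSup (h x) ν) μ ≤ essSup (fun y => essSup (fun x => h x y) μ) ν := by
  set C := essSup (fun y => essSup (fun x => h x y) μ) ν
  have hyx : ∀ᵐ y ∂ν, ∀ᵐ x ∂μ, h x y ≤ C := by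
    filter_upwards [ENNReal.ae_le_essSup (fun y => essSup (fun x => h x y) μ)] with y hy
    filter_upwards [ENNReal.ae_le_essSup (fun x => h x y)] with x hx
    exact hx.trans hy
  have hxy := (Measure.ae_ae_comm (p := fun x y => h x y ≤ C)
    (measurableSet_le hh measurable_const)).2 hyx
  refine essSup_le_of_ae_le C ?_
  filter_upwards [hxy] with x hx
  exact essSup_le_of_ae_le C hx

theorem essSup_lintegral_le [SFinite μ] [SFinite ν] {h : α → β → ℝ≥0∞}
    (hh : Measurable (uncurry h)) :
    essSup (fun x => ∫⁻ y, h x y ∂ν) μ ≤ ∫⁻ y, essSup (fun x => h x y) μ ∂ν := by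
  have hH : Measurable fun y => essSup (fun x => h x y) μ :=
    Measurable.essSup_prod_right (h := flip h) (hh.comp measurable_swap)
  have hyx : ∀ᵐ y ∂ν, ∀ᵐ x ∂μ, h x y ≤ essSup (fun x => h x y) μ :=
    Eventually.of_forall fun y => ENNReal.ae_le_essSup (fun x => h x y)
  have hxy := (Measure.ae_ae_comm (p := fun x y => h x y ≤ essSup (fun x => h x y) μ)
    (measurableSet_le hh (hH.comp measurable_snd))).2 hyx
  refine essSup_le_of_ae_le _ ?_
  filter_upwards [hxy] with x hx
  exact lintegral_mono_ae hx

end EssSup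

section Minkowski

variable {α β : Type*} [MeasurableSpace α] [MeasurableSpace β] {μ : Measure α} {ν : Measure β}

theorem lintegral_le_of_forall_lintegral_lt_top_le [SigmaFinite μ] {F : α → ℝ≥0∞} {C : ℝ≥0∞}
    (h : ∀ G : α → ℝ≥0∞, Measurable G → G ≤ F → ∫⁻ x, G x ∂μ < ∞ → ∫⁻ x, G x ∂μ ≤ C) :
    ∫⁻ x, F x ∂μ ≤ C := by
  rw [lintegral_eq_nnreal]
  refine iSup₂_le fun φ hφ => le_of_forall_lt fun L hL => ?_
  rw [← SimpleFunc.lintegral_eq_lintegral, SimpleFunc.coe_map] at hL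
  obtain ⟨g, hgφ, hg_fin, hLg⟩ := exists_lt_lintegral_simpleFunc_of_lt_lintegral hL
  exact hLg.trans_le (h _ g.measurable.coe_nnreal_ennreal
    (fun x => (ENNReal.coe_le_coe.2 (hgφ x)).trans (hφ x)) hg_fin)

theorem ENNReal.le_rpow_of_le_mul_rpow {s c : ℝ} (hsc : s.HolderConjugate c) {X R : ℝ≥0∞}
    (hX : X ≠ ∞) (h : X ≤ R * X ^ (1 / c)) : X ≤ R ^ s := by
  rcases eq_or_ne X 0 with rfl | hX0
  · exact zero_le
  have hsplit : X ^ (1 / s) * X ^ (1 / c) = X := by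
    rw [← ENNReal.rpow_add _ _ hX0 hX, one_div, one_div, hsc.inv_add_inv_eq_one,
      ENNReal.rpow_one]
  have hXc0 : X ^ (1 / c) ≠ 0 := by simp [hX0, hX]
  have hXc_top : X ^ (1 / c) ≠ ∞ := by simp [hX0, hX]
  have hroot : X ^ (1 / s) ≤ R :=
    (ENNReal.mul_le_mul_iff_left hXc0 hXc_top).1 (hsplit.le.trans h)
  exact (ENNReal.rpow_inv_le_iff hsc.pos).1 (by rwa [← one_div])

theorem lintegral_rpow_le_mul_of_le_lintegral [SFinite μ] [SFinite ν] {s : ℝ} (hs : 1 < s)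
    {h : α → β → ℝ≥0∞} (hh : Measurable (uncurry h)) {G : α → ℝ≥0∞} (hG : Measurable G)
    (hGh : ∀ x, G x ≤ ∫⁻ y, h x y ∂ν) :
    ∫⁻ x, G x ^ s ∂μ ≤
      (∫⁻ y, (∫⁻ x, h x y ^ s ∂μ) ^ (1 / s) ∂ν) * (∫⁻ x, G x ^ s ∂μ) ^ (1 / s.conjExponent) := by
  calc ∫⁻ x, G x ^ s ∂μ ≤ ∫⁻ x, (∫⁻ y, h x y ∂ν) * G x ^ (s - 1) ∂μ := by
        refine lintegral_mono fun x => ?_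
        calc G x ^ s = G x ^ (1 : ℝ) * G x ^ (s - 1) := by
              rw [← ENNReal.rpow_add_of_nonneg _ _ zero_le_one (by linarith), add_sub_cancel]
          _ ≤ _ := by rw [ENNReal.rpow_one]; gcongr; exact hGh x
    _ = ∫⁻ y, ∫⁻ x, h x y * G x ^ (s - 1) ∂μ ∂ν := by
        simp_rw [← lintegral_mul_const _ hh.of_uncurry_left]
        exact lintegral_lintegral_swap (hh.mul ((hG.pow_const _).comp measurable_fst)).aemeasurable
    _ ≤ ∫⁻ y, (∫⁻ x, h x y ^ s ∂μ) ^ (1 / s) * (∫⁻ x, G x ^ s ∂μ) ^ (1 / s.conjExponent) ∂ν :=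
        lintegral_mono fun y => ENNReal.lintegral_mul_rpow_le_lintegral_rpow_mul_lintegral_rpow
          (.conjExponent hs) hh.of_uncurry_right.aemeasurable hG.aemeasurable
    _ = _ := lintegral_mul_const _ ((hh.pow_const s).lintegral_prod_left.pow_const _)

theorem lintegral_rpow_lintegral_le [SigmaFinite μ] [SFinite ν] {s : ℝ} (hs : 1 < s)
    {h : α → β → ℝ≥0∞} (hh : Measurable (uncurry h)) :
    ∫⁻ x, (∫⁻ y, h x y ∂ν) ^ s ∂μ ≤ (∫⁻ y, (∫⁻ x, h x y ^ s ∂μ) ^ (1 / s) ∂ν) ^ s := by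
  have hsc : s.HolderConjugate s.conjExponent := .conjExponent hs
  -- The Hölder bound can only be divided by `(∫ G ^ s) ^ (1 / s.conjExponent)` when it is finite.
  refine lintegral_le_of_forall_lintegral_lt_top_le fun G hG hGh hG_fin => ?_
  have hbound := lintegral_rpow_le_mul_of_le_lintegral (μ := μ) hs hh (hG.pow_const (1 / s))
    fun x => by rw [one_div]; exact (ENNReal.rpow_inv_le_iff hsc.pos).2 (hGh x)
  simp_rw [← ENNReal.rpow_mul, one_div_mul_cancel hsc.ne_zero, ENNReal.rpow_one] at hbound
  exact ENNReal.le_rpow_of_le_mul_rpow hsc hG_fin.ne hbound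

theorem eLpNorm_lintegral_le [SigmaFinite μ] [SFinite ν] {s : ℝ≥0∞} (hs : 1 ≤ s)
    {h : α → β → ℝ≥0∞} (hh : Measurable (uncurry h)) :
    eLpNorm (fun x => ∫⁻ y, h x y ∂ν) s μ ≤ ∫⁻ y, eLpNorm (fun x => h x y) s μ ∂ν := by
  rcases eq_or_ne s ∞ with rfl | hs_top
  · simpa only [eLpNorm_exponent_top, eLpNormEssSup_eq_essSup_enorm, enorm_eq_self]
      using essSup_lintegral_le hh
  rcases hs.eq_or_lt with rfl | hs_one
  · simp only [eLpNorm_one_eq_lintegral_enorm, enorm_eq_self]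
    exact (lintegral_lintegral_swap hh.aemeasurable).le
  have hs_real : 1 < s.toReal := by
    simpa using (ENNReal.toReal_lt_toReal ENNReal.one_ne_top hs_top).2 hs_one
  simp only [eLpNorm_eq_lintegral_rpow_enorm_toReal (zero_lt_one.trans hs_one).ne' hs_top,
    enorm_eq_self, one_div]
  rw [ENNReal.rpow_inv_le_iff (zero_lt_one.trans hs_real)]
  simpa only [one_div] using lintegral_rpow_lintegral_le hs_real hh

theorem eLpNorm_rpow {f : α → ℝ≥0∞} {b : ℝ} (hb : 0 < b) (p : ℝ≥0∞) :
    eLpNorm (fun x => f x ^ b) p μ = eLpNorm f (p * ENNReal.ofReal b) μ ^ b := by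
  simpa only [enorm_eq_self] using eLpNorm_enorm_rpow (μ := μ) (p := p) f hb

theorem eLpNorm_eLpNorm_le [SigmaFinite μ] [SigmaFinite ν] {q r : ℝ≥0∞} (hq : 0 < q)
    (hqr : q ≤ r) {h : α → β → ℝ≥0∞} (hh : Measurable (uncurry h)) :
    eLpNorm (fun x => eLpNorm (h x) q ν) r μ ≤
      eLpNorm (fun y => eLpNorm (fun x => h x y) r μ) q ν := by
  rcases eq_or_ne q ∞ with rfl | hq_top
  · rw [top_le_iff.1 hqr]
    simpa only [eLpNorm_exponent_top, eLpNormEssSup_eq_essSup_enorm, enorm_eq_self]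
      using essSup_essSup_le hh
  set a := q.toReal
  have ha : 0 < a := ENNReal.toReal_pos hq.ne' hq_top
  have hqa : ENNReal.ofReal a = q := ENNReal.ofReal_toReal hq_top
  have hLq : ∀ F : β → ℝ≥0∞, eLpNorm F q ν = (∫⁻ y, F y ^ a ∂ν) ^ a⁻¹ := fun F => by
    simp only [eLpNorm_eq_lintegral_rpow_enorm_toReal hq.ne' hq_top, enorm_eq_self, one_div, a]
  have hs : 1 ≤ r * ENNReal.ofReal a⁻¹ := by
    rw [ENNReal.ofReal_inv_of_pos ha, hqa, ← div_eq_mul_inv]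
    exact (ENNReal.le_div_iff_mul_le (.inl hq.ne') (.inl hq_top)).2 (by rwa [one_mul])
  have hsa : r * ENNReal.ofReal a⁻¹ * ENNReal.ofReal a = r := by
    rw [ENNReal.ofReal_inv_of_pos ha, hqa, ENNReal.inv_mul_cancel_right hq.ne' hq_top]
  calc eLpNorm (fun x => eLpNorm (h x) q ν) r μ
      = eLpNorm (fun x => ∫⁻ y, h x y ^ a ∂ν) (r * ENNReal.ofReal a⁻¹) μ ^ a⁻¹ := by
        simp only [hLq]
        exact eLpNorm_rpow (inv_pos.2 ha) r
    _ ≤ (∫⁻ y, eLpNorm (fun x => h x y ^ a) (r * ENNReal.ofReal a⁻¹) μ ∂ν) ^ a⁻¹ := by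
        gcongr
        exact eLpNorm_lintegral_le hs (hh.pow_const a)
    _ = eLpNorm (fun y => eLpNorm (fun x => h x y) r μ) q ν := by
        simp only [hLq, eLpNorm_rpow ha, hsa]

end Minkowski

section NormIn

variable {n : ℕ} {X : Fin n → Type*} [∀ j, MeasurableSpace (X j)] (μ : ∀ j, Measure (X j))

theorem normIn_eq_eLpNorm {j : Fin n} {q : ℝ≥0∞} (hq : q ≠ 0) (f : (∀ k, X k) → ℝ≥0∞)
    (x : ∀ k, X k) : normIn μ j q f x = eLpNorm (fun t => f (update x j t)) q (μ j) := by
  unfold normIn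
  split_ifs with hq_top
  · simp only [hq_top, eLpNorm_exponent_top, eLpNormEssSup_eq_essSup_enorm, enorm_eq_self]
  · simp only [eLpNorm_eq_lintegral_rpow_enorm_toReal hq hq_top, enorm_eq_self]

theorem normIn_mono {j : Fin n} {q : ℝ≥0∞} {f g : (∀ k, X k) → ℝ≥0∞} (hfg : f ≤ g) :
    normIn μ j q f ≤ normIn μ j q g := fun x => by
  unfold normIn
  split_ifs
  · exact essSup_mono_ae (Eventually.of_forall fun t => hfg _)
  · gcongr
    exact hfg _

theorem measurable_normIn [∀ j, SFinite (μ j)] {j : Fin n} {q : ℝ≥0∞}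
    {f : (∀ k, X k) → ℝ≥0∞} (hf : Measurable f) : Measurable (normIn μ j q f) := by
  have hupd : Measurable fun p : (∀ k, X k) × X j => f (update p.1 j p.2) :=
    hf.comp measurable_update'
  unfold normIn
  split_ifs
  · exact Measurable.essSup_prod_right hupd
  · exact (hupd.pow_const _).lintegral_prod_right'.pow_const _

theorem normIn_normIn_le [∀ j, SigmaFinite (μ j)] {j k : Fin n} (hjk : j ≠ k) {q r : ℝ≥0∞}
    (hq : 0 < q) (hqr : q ≤ r) {f : (∀ k, X k) → ℝ≥0∞} (hf : Measurable f) :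
    normIn μ k r (normIn μ j q f) ≤ normIn μ j q (normIn μ k r f) := fun x => by
  simp only [normIn_eq_eLpNorm μ hq.ne', normIn_eq_eLpNorm μ (hq.trans_le hqr).ne',
    update_comm hjk]
  refine eLpNorm_eLpNorm_le hq hqr (h := fun u t => f (update (update x k u) j t)) ?_
  exact hf.comp (measurable_update'.comp
    (((measurable_update x).comp measurable_fst).prodMk measurable_snd))

theorem measurable_foldl_normIn [∀ j, SFinite (μ j)] (L : List (Fin n × ℝ≥0∞))
    {f : (∀ k, X k) → ℝ≥0∞} (hf : Measurable f) :
    Measurable (L.foldl (fun g jq => normIn μ jq.1 jq.2 g) f) := by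
  induction L generalizing f with
  | nil => exact hf
  | cons _ L ih => exact ih (measurable_normIn μ hf)

theorem foldl_normIn_mono (L : List (Fin n × ℝ≥0∞)) {f g : (∀ k, X k) → ℝ≥0∞} (hfg : f ≤ g) :
    L.foldl (fun g jq => normIn μ jq.1 jq.2 g) f ≤
      L.foldl (fun g jq => normIn μ jq.1 jq.2 g) g := by
  induction L generalizing f g with
  | nil => exact hfg
  | cons _ L ih => exact ih (normIn_mono μ hfg)

theorem mixedNorm_append_swap_le [∀ j, SigmaFinite (μ j)] (l₁ l₂ : List (Fin n × ℝ≥0∞))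
    {j k : Fin n} (hjk : j ≠ k) {q r : ℝ≥0∞} (hq : 0 < q) (hqr : q ≤ r)
    {f : (∀ k, X k) → ℝ≥0∞} (hf : Measurable f) :
    mixedNorm μ (l₁ ++ (j, q) :: (k, r) :: l₂) f ≤
      mixedNorm μ (l₁ ++ (k, r) :: (j, q) :: l₂) f := by
  refine iSup_mono fun x => ?_
  simp only [List.foldl_append, List.foldl_cons]
  exact foldl_normIn_mono μ l₂
    (normIn_normIn_le μ hjk hq hqr (measurable_foldl_normIn μ l₁ hf)) x

end NormIn

section ListSwap

variable {γ : Type*} {n : ℕ}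

theorem List.ofFn_eq_take_append_cons_cons (g : Fin n → γ) {p p' : Fin n}
    (hp : (p : ℕ) + 1 = p') :
    List.ofFn g = (List.ofFn g).take p ++ g p :: g p' :: (List.ofFn g).drop (p' + 1) := by
  conv_lhs => rw [← List.take_append_drop p (List.ofFn g)]
  rw [List.drop_eq_getElem_cons (by simp), List.drop_eq_getElem_cons (by simp; omega)]
  simp [hp]

theorem List.exists_ofFn_comp_swap (g : Fin n → γ) {p p' : Fin n} (hp : (p : ℕ) + 1 = p') :
    ∃ l₁ l₂, List.ofFn g = l₁ ++ g p :: g p' :: l₂ ∧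
      List.ofFn (g ∘ Equiv.swap p p') = l₁ ++ g p' :: g p :: l₂ := by
  refine ⟨_, _, List.ofFn_eq_take_append_cons_cons g hp, ?_⟩
  have hfix : ∀ k : Fin n, (k : ℕ) ≠ p → (k : ℕ) ≠ p' → g (Equiv.swap p p' k) = g k :=
    fun k h h' => congrArg g
      (swap_apply_of_ne_of_ne (fun e => h (congrArg _ e)) (fun e => h' (congrArg _ e)))
  rw [List.ofFn_eq_take_append_cons_cons (g ∘ Equiv.swap p p') hp]
  simp only [comp_apply, swap_apply_left, swap_apply_right]
  congr 1
  · refine List.ext_getElem (by simp) fun k hk _ => ?_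
    simp only [List.length_take, List.length_ofFn] at hk
    simp only [List.getElem_take, List.getElem_ofFn, comp_apply]
    exact hfix _ (by simp; omega) (by simp; omega)
  · congr 2
    refine List.ext_getElem (by simp) fun k hk _ => ?_
    simp only [List.length_drop, List.length_ofFn] at hk
    simp only [List.getElem_drop, List.getElem_ofFn, comp_apply]
    exact hfix _ (by simp; omega) (by simp; omega)

end ListSwap

section ReversedPairs

variable {n : ℕ}

/-- The pairs `i < j` that appear in the reverse order `j, i` in the list `σ 0, …, σ (n - 1)`;
`Raises p σ` says `p i ≤ p j` on them. -/
def reversedPairs (σ : Perm (Fin n)) : Finset (Fin n × Fin n) :=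
  {ij | ij.1 < ij.2 ∧ σ⁻¹ ij.2 < σ⁻¹ ij.1}

@[simp]
theorem mem_reversedPairs {σ : Perm (Fin n)} {i j : Fin n} :
    (i, j) ∈ reversedPairs σ ↔ i < j ∧ σ⁻¹ j < σ⁻¹ i := by
  simp [reversedPairs]

theorem Equiv.Perm.exists_descent_of_ne_one {σ : Perm (Fin n)} (hσ : σ ≠ 1) :
    ∃ p p' : Fin n, (p : ℕ) + 1 = p' ∧ σ p' < σ p := by
  by_contra! h
  cases n with
  | zero => exact hσ (Subsingleton.elim _ _)
  | succ m =>
    have hmono : StrictMono σ := Fin.strictMono_iff_lt_succ.2 fun i =>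
      (h _ _ (by simp)).lt_of_ne (σ.injective.ne Fin.castSucc_lt_succ.ne)
    exact hσ (Perm.ext fun k => congrFun hmono.eq_id k)

theorem eq_of_lt_of_swap_lt_swap {p p' : Fin n} (hp : (p : ℕ) + 1 = p') {x y : Fin n}
    (hxy : x < y) (hswap : swap p p' y < swap p p' x) : x = p ∧ y = p' := by
  rw [swap_apply_def, swap_apply_def] at hswap
  split_ifs at hswap <;> simp only [Fin.lt_def, Fin.ext_iff] at * <;> omega

theorem reversedPairs_mul_swap_ssubset {σ : Perm (Fin n)} {p p' : Fin n}
    (hp : (p : ℕ) + 1 = p') (hσ : σ p' < σ p) :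
    reversedPairs (σ * swap p p') ⊂ reversedPairs σ := by
  have hinv : ∀ k, (σ * swap p p')⁻¹ k = swap p p' (σ⁻¹ k) := fun k => by
    simp [mul_inv_rev, Perm.mul_apply]
  have hpp' : p < p' := Fin.lt_def.2 (by omega)
  refine Finset.ssubset_iff_of_subset ?_ |>.2 ⟨(σ p', σ p), by simp [hσ, hpp'], ?_⟩
  · rintro ⟨i, j⟩ hij
    rw [mem_reversedPairs, hinv, hinv] at hij
    refine mem_reversedPairs.2 ⟨hij.1, not_le.1 fun hle => ?_⟩
    obtain ⟨hi, hj⟩ :=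
      eq_of_lt_of_swap_lt_swap hp (hle.lt_of_ne (σ⁻¹.injective.ne hij.1.ne)) hij.2
    rw [Perm.inv_eq_iff_eq] at hi hj
    exact hσ.not_gt (hi ▸ hj ▸ hij.1)
  · simp [swap_apply_left, swap_apply_right, hpp'.le]

-- Bubble sort: composing with the swap of an adjacent descent undoes exactly one reversed pair.
theorem le_ofFn_comp_perm {γ β : Type*} [Preorder β] (Φ : List γ → β) (R : γ → γ → Prop)
    (hΦ : ∀ l₁ l₂ x y, R x y → Φ (l₁ ++ x :: y :: l₂) ≤ Φ (l₁ ++ y :: x :: l₂))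
    (a : Fin n → γ) (σ : Perm (Fin n)) (hR : ∀ ij ∈ reversedPairs σ, R (a ij.1) (a ij.2)) :
    Φ (List.ofFn a) ≤ Φ (List.ofFn (a ∘ σ)) := by
  by_cases hσ : σ = 1
  · simp [hσ]
  obtain ⟨p, p', hp, hdesc⟩ := σ.exists_descent_of_ne_one hσ
  have hsub := reversedPairs_mul_swap_ssubset hp hdesc
  obtain ⟨l₁, l₂, hl, hl_swap⟩ := List.exists_ofFn_comp_swap (a ∘ σ) hp
  calc Φ (List.ofFn a) ≤ Φ (List.ofFn (a ∘ (σ * swap p p'))) :=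
        le_ofFn_comp_perm Φ R hΦ a _ fun ij h => hR ij (hsub.subset h)
    _ ≤ Φ (List.ofFn (a ∘ σ)) := by
        rw [Perm.coe_mul, ← comp_assoc, hl_swap, hl]
        refine hΦ _ _ _ _ (hR (σ p', σ p) ?_)
        simpa using ⟨hdesc, Fin.lt_def.2 (by omega)⟩
termination_by (reversedPairs σ).card
decreasing_by exact Finset.card_lt_card hsub

end ReversedPairs

/-- Mixed-norm Minkowski integral inequality: if `σ` raises `P` then
`‖f‖_P ≤ ‖f‖_{P·σ}`, and if `ρ` lowers `P` then `‖f‖_{P·ρ} ≤ ‖f‖_P`, for every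
nonnegative measurable `f` on the product space. -/
theorem mixedNorm_minkowski {n : ℕ} {X : Fin n → Type*}
    [∀ j, MeasurableSpace (X j)] (μ : ∀ j, Measure (X j)) [∀ j, SigmaFinite (μ j)]
    (p : Fin n → ℝ≥0∞) (hp : ∀ j, 0 < p j)
    (σ ρ : Equiv.Perm (Fin n)) (hσ : Raises p σ) (hρ : Lowers p ρ)
    (f : (∀ k, X k) → ℝ≥0∞) (hf : Measurable f) :
    mixedNorm μ (List.ofFn fun k => (k, p k)) f ≤
        mixedNorm μ (List.ofFn fun k => (σ k, p (σ k))) f ∧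
      mixedNorm μ (List.ofFn fun k => (ρ k, p (ρ k))) f ≤
        mixedNorm μ (List.ofFn fun k => (k, p k)) f := by
  have hswap : ∀ l₁ l₂ (x y : Fin n × ℝ≥0∞), x.1 ≠ y.1 ∧ 0 < x.2 ∧ x.2 ≤ y.2 →
      mixedNorm μ (l₁ ++ x :: y :: l₂) f ≤ mixedNorm μ (l₁ ++ y :: x :: l₂) f :=
    fun l₁ l₂ _ _ h => mixedNorm_append_swap_le μ l₁ l₂ h.1 h.2.1 h.2.2 hf
  constructor
  · refine le_ofFn_comp_perm (mixedNorm μ · f) _ hswap (fun k => (k, p k)) σ ?_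
    rintro ⟨i, j⟩ hij
    rw [mem_reversedPairs] at hij
    exact ⟨hij.1.ne, hp i, hσ i j hij.1 hij.2⟩
  · have h := le_ofFn_comp_perm (mixedNorm μ · f) _ hswap (fun k => (ρ k, p (ρ k))) ρ⁻¹ ?_
    · simpa [comp_def] using h
    rintro ⟨i, j⟩ hij
    rw [mem_reversedPairs, inv_inv] at hij
    exact ⟨ρ.injective.ne hij.1.ne, hp _, hρ (ρ j) (ρ i) hij.2 (by simpa using hij.1)⟩
end

section
/- Littlewood-type 4/3 mixed-norm inequality: for any σ-finite measure spaces (X,μ) and (Y,ν) and any nonnegative measurable function f(x,y) on X × Y, (∫_{X×Y} f^{4/3} dμ dν)^{3/4} ≤ (∫_Y (∫_X f² dμ)^{1/2} dν)^{1/2} · (∫_X (∫_Y f² dν)^{1/2} dμ)^{1/2}. -/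
/-!
Write `A y = ∫ f(·, y)²` and `I y = ∫ f(·, y)`. Hölder in `x` (exponents `3`, `3/2`) gives
`∫ f(·, y)^{4/3} ≤ A y^{1/3} I y^{2/3}`, and Hölder in `y` (exponents `3/2`, `3`) then bounds
`∫ f^{4/3}` by `(∫ A^{1/2})^{2/3} (∫ I²)^{1/3}`. Minkowski's integral inequality bounds
`(∫ I²)^{1/2}` by `∫_X (∫_Y f² dν)^{1/2} dμ`, and raising to the power `3/4` gives the claim.
-/

open MeasureTheory
open scoped ENNReal

namespace ENNReal

variable {X Y : Type*} [MeasurableSpace X] [MeasurableSpace Y]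

theorem lintegral_rpow_four_thirds_le {μ : Measure X} {g : X → ℝ≥0∞} (hg : AEMeasurable g μ) :
    ∫⁻ x, g x ^ (4 / 3 : ℝ) ∂μ ≤
      (∫⁻ x, g x ^ (2 : ℝ) ∂μ) ^ (1 / 3 : ℝ) * (∫⁻ x, g x ∂μ) ^ (2 / 3 : ℝ) := by
  have hsplit (a : ℝ≥0∞) : a ^ (4 / 3 : ℝ) = (a ^ (2 : ℝ)) ^ (1 / 3 : ℝ) * a ^ (2 / 3 : ℝ) := by
    rw [← rpow_mul, ← rpow_add_of_nonneg _ _ (by norm_num) (by norm_num)]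
    norm_num
  simp_rw [hsplit]
  exact lintegral_mul_norm_pow_le (hg.pow_const _) hg (by norm_num) (by norm_num) (by norm_num)

theorem lintegral_rpow_one_third_mul_rpow_two_thirds_le {μ : Measure X} {a b : X → ℝ≥0∞}
    (ha : AEMeasurable a μ) (hb : AEMeasurable b μ) :
    ∫⁻ x, a x ^ (1 / 3 : ℝ) * b x ^ (2 / 3 : ℝ) ∂μ ≤
      (∫⁻ x, a x ^ (1 / 2 : ℝ) ∂μ) ^ (2 / 3 : ℝ) * (∫⁻ x, b x ^ (2 : ℝ) ∂μ) ^ (1 / 3 : ℝ) :=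
  calc ∫⁻ x, a x ^ (1 / 3 : ℝ) * b x ^ (2 / 3 : ℝ) ∂μ
      = ∫⁻ x, (a x ^ (1 / 2 : ℝ)) ^ (2 / 3 : ℝ) * (b x ^ (2 : ℝ)) ^ (1 / 3 : ℝ) ∂μ := by
        refine lintegral_congr fun x => ?_
        rw [← rpow_mul, ← rpow_mul]
        norm_num
    _ ≤ _ := lintegral_mul_norm_pow_le (ha.pow_const _) (hb.pow_const _)
        (by norm_num) (by norm_num) (by norm_num)

/-- Minkowski's integral inequality for the exponent `2`. -/
theorem lintegral_rpow_two_lintegral_le (μ : Measure X) (ν : Measure Y) [SFinite μ] [SFinite ν]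
    {f : X × Y → ℝ≥0∞} (hf : Measurable f) :
    ∫⁻ y, (∫⁻ x, f (x, y) ∂μ) ^ (2 : ℝ) ∂ν ≤
      (∫⁻ x, (∫⁻ y, f (x, y) ^ (2 : ℝ) ∂ν) ^ (1 / 2 : ℝ) ∂μ) ^ (2 : ℝ) := by
  have hf_left (y : Y) : Measurable fun x => f (x, y) := hf.comp measurable_prodMk_right
  have hf_right (x : X) : Measurable fun y => f (x, y) := hf.comp measurable_prodMk_left
  have hnorm : Measurable fun x => (∫⁻ y, f (x, y) ^ (2 : ℝ) ∂ν) ^ (1 / 2 : ℝ) :=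
    (Measurable.lintegral_prod_right (f := fun x y => f (x, y) ^ (2 : ℝ))
      (hf.pow_const _)).pow_const _
  -- Expanding the square as an integral over `X × X` lets Fubini move `∫ dν` inside,
  -- where Cauchy–Schwarz applies.
  calc ∫⁻ y, (∫⁻ x, f (x, y) ∂μ) ^ (2 : ℝ) ∂ν
      = ∫⁻ y, ∫⁻ p : X × X, f (p.1, y) * f (p.2, y) ∂μ.prod μ ∂ν := by
        refine lintegral_congr fun y => ?_
        rw [rpow_two, sq, lintegral_prod_mul (hf_left y).aemeasurable (hf_left y).aemeasurable]
    _ = ∫⁻ p : X × X, ∫⁻ y, f (p.1, y) * f (p.2, y) ∂ν ∂μ.prod μ :=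
        (lintegral_lintegral_swap ((hf.comp (measurable_fst.fst.prodMk measurable_snd)).mul
          (hf.comp (measurable_fst.snd.prodMk measurable_snd))).aemeasurable).symm
    _ ≤ ∫⁻ p : X × X, (∫⁻ y, f (p.1, y) ^ (2 : ℝ) ∂ν) ^ (1 / 2 : ℝ) *
          (∫⁻ y, f (p.2, y) ^ (2 : ℝ) ∂ν) ^ (1 / 2 : ℝ) ∂μ.prod μ :=
        lintegral_mono fun p => lintegral_mul_le_Lp_mul_Lq ν .two_two
          (hf_right p.1).aemeasurable (hf_right p.2).aemeasurable
    _ = (∫⁻ x, (∫⁻ y, f (x, y) ^ (2 : ℝ) ∂ν) ^ (1 / 2 : ℝ) ∂μ) ^ (2 : ℝ) := by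
        rw [rpow_two, sq, lintegral_prod_mul hnorm.aemeasurable hnorm.aemeasurable]

end ENNReal

/-- Littlewood-type 4/3 mixed-norm inequality: for σ-finite `(X,μ)`, `(Y,ν)` and
nonnegative measurable `f` on `X × Y`,
`(∫ f^{4/3})^{3/4} ≤ (∫_Y (∫_X f² dμ)^{1/2} dν)^{1/2} · (∫_X (∫_Y f² dν)^{1/2} dμ)^{1/2}`. -/
theorem littlewood_four_thirds {X Y : Type*} [MeasurableSpace X] [MeasurableSpace Y]
    (μ : Measure X) (ν : Measure Y) [SigmaFinite μ] [SigmaFinite ν]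
    (f : X × Y → ℝ≥0∞) (hf : Measurable f) :
    (∫⁻ z, f z ^ (4 / 3 : ℝ) ∂(μ.prod ν)) ^ (3 / 4 : ℝ) ≤
      (∫⁻ y, (∫⁻ x, f (x, y) ^ (2 : ℝ) ∂μ) ^ (1 / 2 : ℝ) ∂ν) ^ (1 / 2 : ℝ) *
        (∫⁻ x, (∫⁻ y, f (x, y) ^ (2 : ℝ) ∂ν) ^ (1 / 2 : ℝ) ∂μ) ^ (1 / 2 : ℝ) := by
  set A : Y → ℝ≥0∞ := fun y => ∫⁻ x, f (x, y) ^ (2 : ℝ) ∂μ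
  set I : Y → ℝ≥0∞ := fun y => ∫⁻ x, f (x, y) ∂μ
  set B : ℝ≥0∞ := ∫⁻ x, (∫⁻ y, f (x, y) ^ (2 : ℝ) ∂ν) ^ (1 / 2 : ℝ) ∂μ
  have hA : Measurable A :=
    Measurable.lintegral_prod_left (f := fun x y => f (x, y) ^ (2 : ℝ)) (hf.pow_const _)
  have hI : Measurable I := Measurable.lintegral_prod_left hf
  calc (∫⁻ z, f z ^ (4 / 3 : ℝ) ∂(μ.prod ν)) ^ (3 / 4 : ℝ)
      = (∫⁻ y, ∫⁻ x, f (x, y) ^ (4 / 3 : ℝ) ∂μ ∂ν) ^ (3 / 4 : ℝ) := by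
        rw [lintegral_prod_symm _ (hf.pow_const _).aemeasurable]
    _ ≤ (∫⁻ y, A y ^ (1 / 3 : ℝ) * I y ^ (2 / 3 : ℝ) ∂ν) ^ (3 / 4 : ℝ) := by
        gcongr with y
        exact ENNReal.lintegral_rpow_four_thirds_le (hf.comp measurable_prodMk_right).aemeasurable
    _ ≤ ((∫⁻ y, A y ^ (1 / 2 : ℝ) ∂ν) ^ (2 / 3 : ℝ) * (∫⁻ y, I y ^ (2 : ℝ) ∂ν) ^ (1 / 3 : ℝ))
          ^ (3 / 4 : ℝ) := by
        gcongr
        exact ENNReal.lintegral_rpow_one_third_mul_rpow_two_thirds_le hA.aemeasurable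
          hI.aemeasurable
    _ ≤ ((∫⁻ y, A y ^ (1 / 2 : ℝ) ∂ν) ^ (2 / 3 : ℝ) * (B ^ (2 : ℝ)) ^ (1 / 3 : ℝ))
          ^ (3 / 4 : ℝ) := by
        gcongr
        exact ENNReal.lintegral_rpow_two_lintegral_le μ ν hf
    _ = (∫⁻ y, A y ^ (1 / 2 : ℝ) ∂ν) ^ (1 / 2 : ℝ) * B ^ (1 / 2 : ℝ) := by
        rw [ENNReal.mul_rpow_of_nonneg _ _ (by norm_num), ← ENNReal.rpow_mul, ← ENNReal.rpow_mul,
          ← ENNReal.rpow_mul]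
        norm_num
end

section
/- Blei's 6/5 inequality (integral form): for any σ-finite measure spaces (X₁,μ₁), (X₂,μ₂), (X₃,μ₃) and any nonnegative measurable function f(x₁,x₂,x₃) on X₁ × X₂ × X₃, (∫ f^{6/5})^{5/6} ≤ ∏_{i=1}^{3} [∫∫ ( ∫ f² dμ_i )^{1/2} dμ_j dμ_k ]^{1/3}, where in the iᵗʰ factor the inner L² norm is taken in the variable x_i and the outer L¹ norm over the remaining two variables x_j, x_k ({i,j,k} = {1,2,3}), and the left-hand side integral is over the product space X₁ × X₂ × X₃ with the product measure. -/
/-!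
Hölder's inequality in `x₁` interpolates `∫ f^{6/5} dx₁ ≤ (∫ f² dx₁)^{1/5} (∫ f dx₁)^{4/5}`.
Three-function Hölder in `x₂` (weights `2/5, 1/5, 2/5`) and then in `x₃` (weights `2/5, 2/5, 1/5`)
bounds `∫ f^{6/5}` by `(A B C)^{2/5}`, where `A` is the first factor of the right-hand side and
`B`, `C` are mixed norms with the `L¹` norm in `x₁` (resp. `(x₁, x₂)`) taken inside an `L²` norm.
Minkowski's integral inequality exchanges these, bounding `B` and `C` by the other two factors.
-/

open MeasureTheory Function
open scoped ENNReal

section GeneralInequalities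

variable {α β : Type*} [MeasurableSpace α] [MeasurableSpace β]

theorem lintegral_mul_rpow_mul_rpow_le {μ : Measure α} {u v w : α → ℝ≥0∞}
    (hu : AEMeasurable u μ) (hv : AEMeasurable v μ) (hw : AEMeasurable w μ)
    {p q r : ℝ} (hp : 0 ≤ p) (hq : 0 ≤ q) (hr : 0 ≤ r) (hpqr : p + q + r = 1) :
    ∫⁻ x, u x ^ p * v x ^ q * w x ^ r ∂μ ≤
      (∫⁻ x, u x ∂μ) ^ p * (∫⁻ x, v x ∂μ) ^ q * (∫⁻ x, w x ∂μ) ^ r := by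
  simpa [Fin.prod_univ_three] using
    ENNReal.lintegral_prod_norm_pow_le Finset.univ (f := ![u, v, w]) (p := ![p, q, r])
      (fun i _ => by fin_cases i <;> assumption) (by simpa [Fin.sum_univ_three] using hpqr)
      (fun i _ => by fin_cases i <;> assumption)

theorem lintegral_rpow_interpolate_le {μ : Measure α} {u : α → ℝ≥0∞} (hu : AEMeasurable u μ)
    {p q s t : ℝ} (hp : 0 ≤ p) (hq : 0 ≤ q) (hs : 0 ≤ s) (ht : 0 ≤ t) (hst : s + t = 1) :
    ∫⁻ x, u x ^ (s * p + t * q) ∂μ ≤ (∫⁻ x, u x ^ p ∂μ) ^ s * (∫⁻ x, u x ^ q ∂μ) ^ t := by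
  calc ∫⁻ x, u x ^ (s * p + t * q) ∂μ = ∫⁻ x, (u x ^ p) ^ s * (u x ^ q) ^ t ∂μ := by
        refine lintegral_congr fun x => ?_
        rw [← ENNReal.rpow_mul, ← ENNReal.rpow_mul, mul_comm p, mul_comm q,
          ENNReal.rpow_add_of_nonneg _ _ (by positivity) (by positivity)]
    _ ≤ _ := ENNReal.lintegral_mul_norm_pow_le (hu.pow_const p) (hu.pow_const q) hs ht hst

theorem lintegral_lintegral_rpow_two_le {μ : Measure α} {ν : Measure β} [SFinite μ] [SFinite ν]
    {F : α → β → ℝ≥0∞} (hF : Measurable (uncurry F)) :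
    (∫⁻ b, (∫⁻ a, F a b ∂μ) ^ (2 : ℝ) ∂ν) ^ (1 / 2 : ℝ) ≤
      ∫⁻ a, (∫⁻ b, F a b ^ (2 : ℝ) ∂ν) ^ (1 / 2 : ℝ) ∂μ := by
  set h : α → ℝ≥0∞ := fun a => (∫⁻ b, F a b ^ (2 : ℝ) ∂ν) ^ (1 / 2 : ℝ)
  have hFm : Measurable fun p : α × β => F p.1 p.2 := hF
  have hm : Measurable h := by fun_prop
  -- Expand the square as a double integral over `μ.prod μ` and apply Cauchy–Schwarz in `b`.
  have hsq : ∫⁻ b, (∫⁻ a, F a b ∂μ) ^ (2 : ℝ) ∂ν ≤ (∫⁻ a, h a ∂μ) ^ (2 : ℝ) := calc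
    ∫⁻ b, (∫⁻ a, F a b ∂μ) ^ (2 : ℝ) ∂ν
      = ∫⁻ b, ∫⁻ p : α × α, F p.1 b * F p.2 b ∂μ.prod μ ∂ν := by
        simp_rw [ENNReal.rpow_two, sq]
        refine lintegral_congr fun b => (lintegral_prod_mul ?_ ?_).symm <;> fun_prop
    _ = ∫⁻ p : α × α, ∫⁻ b, F p.1 b * F p.2 b ∂ν ∂μ.prod μ :=
        lintegral_lintegral_swap (by fun_prop)
    _ ≤ ∫⁻ p : α × α, h p.1 * h p.2 ∂μ.prod μ :=
        lintegral_mono fun p => ENNReal.lintegral_mul_le_Lp_mul_Lq ν Real.HolderConjugate.two_two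
          (by fun_prop) (by fun_prop)
    _ = (∫⁻ a, h a ∂μ) ^ (2 : ℝ) := by
        rw [lintegral_prod_mul hm.aemeasurable hm.aemeasurable, ENNReal.rpow_two, sq]
  calc (∫⁻ b, (∫⁻ a, F a b ∂μ) ^ (2 : ℝ) ∂ν) ^ (1 / 2 : ℝ)
      ≤ ((∫⁻ a, h a ∂μ) ^ (2 : ℝ)) ^ (1 / 2 : ℝ) := by gcongr
    _ = ∫⁻ a, h a ∂μ := by rw [← ENNReal.rpow_mul]; norm_num

end GeneralInequalities

section TwoVariables

variable {Y Z : Type*} [MeasurableSpace Y] [MeasurableSpace Z] {μ : Measure Y} {ν : Measure Z}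

theorem lintegral_rpow_one_fifth_mul_rpow_four_fifths_le {a g : Y → ℝ≥0∞}
    (ha : AEMeasurable a μ) (hg : AEMeasurable g μ) :
    ∫⁻ y, a y ^ (1 / 5 : ℝ) * g y ^ (4 / 5 : ℝ) ∂μ ≤
      (∫⁻ y, a y ^ (1 / 2 : ℝ) ∂μ) ^ (2 / 5 : ℝ) * (∫⁻ y, g y ^ (2 : ℝ) ∂μ) ^ (1 / 5 : ℝ) *
        (∫⁻ y, g y ∂μ) ^ (2 / 5 : ℝ) := by
  calc ∫⁻ y, a y ^ (1 / 5 : ℝ) * g y ^ (4 / 5 : ℝ) ∂μ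
      = ∫⁻ y, (a y ^ (1 / 2 : ℝ)) ^ (2 / 5 : ℝ) * (g y ^ (2 : ℝ)) ^ (1 / 5 : ℝ) *
          g y ^ (2 / 5 : ℝ) ∂μ := by
        refine lintegral_congr fun y => ?_
        rw [← ENNReal.rpow_mul, ← ENNReal.rpow_mul, mul_assoc,
          ← ENNReal.rpow_add_of_nonneg _ _ (by norm_num) (by norm_num)]
        norm_num
    _ ≤ _ := lintegral_mul_rpow_mul_rpow_le (ha.pow_const _) (hg.pow_const _) hg
        (by norm_num) (by norm_num) (by norm_num) (by norm_num)

theorem lintegral_lintegral_rpow_one_fifth_mul_rpow_four_fifths_le [SFinite μ]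
    {a g : Y × Z → ℝ≥0∞} (ha : Measurable a) (hg : Measurable g) :
    ∫⁻ z, ∫⁻ y, a (y, z) ^ (1 / 5 : ℝ) * g (y, z) ^ (4 / 5 : ℝ) ∂μ ∂ν ≤
      ((∫⁻ z, ∫⁻ y, a (y, z) ^ (1 / 2 : ℝ) ∂μ ∂ν) *
        (∫⁻ z, (∫⁻ y, g (y, z) ^ (2 : ℝ) ∂μ) ^ (1 / 2 : ℝ) ∂ν) *
        (∫⁻ z, (∫⁻ y, g (y, z) ∂μ) ^ (2 : ℝ) ∂ν) ^ (1 / 2 : ℝ)) ^ (2 / 5 : ℝ) := by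
  set P := fun z => ∫⁻ y, a (y, z) ^ (1 / 2 : ℝ) ∂μ
  set Q := fun z => ∫⁻ y, g (y, z) ^ (2 : ℝ) ∂μ
  set R := fun z => ∫⁻ y, g (y, z) ∂μ
  have hP : Measurable P := by fun_prop
  have hQ : Measurable Q := by fun_prop
  have hR : Measurable R := by fun_prop
  calc ∫⁻ z, ∫⁻ y, a (y, z) ^ (1 / 5 : ℝ) * g (y, z) ^ (4 / 5 : ℝ) ∂μ ∂ν
      ≤ ∫⁻ z, P z ^ (2 / 5 : ℝ) * (Q z ^ (1 / 2 : ℝ)) ^ (2 / 5 : ℝ) *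
          (R z ^ (2 : ℝ)) ^ (1 / 5 : ℝ) ∂ν := by
        refine lintegral_mono fun z => ?_
        rw [← ENNReal.rpow_mul, ← ENNReal.rpow_mul, show (1 / 2 : ℝ) * (2 / 5) = 1 / 5 by norm_num,
          show (2 : ℝ) * (1 / 5) = 2 / 5 by norm_num]
        exact lintegral_rpow_one_fifth_mul_rpow_four_fifths_le (by fun_prop) (by fun_prop)
    _ ≤ (∫⁻ z, P z ∂ν) ^ (2 / 5 : ℝ) * (∫⁻ z, Q z ^ (1 / 2 : ℝ) ∂ν) ^ (2 / 5 : ℝ) *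
          (∫⁻ z, R z ^ (2 : ℝ) ∂ν) ^ (1 / 5 : ℝ) :=
        lintegral_mul_rpow_mul_rpow_le (by fun_prop) (by fun_prop) (by fun_prop)
          (by norm_num) (by norm_num) (by norm_num) (by norm_num)
    _ = _ := by
        rw [ENNReal.mul_rpow_of_nonneg _ _ (by norm_num),
          ENNReal.mul_rpow_of_nonneg _ _ (by norm_num), ← ENNReal.rpow_mul (∫⁻ z, R z ^ (2 : ℝ) ∂ν),
          show (1 / 2 : ℝ) * (2 / 5) = 1 / 5 by norm_num]

end TwoVariables

section Blei

variable {X₁ X₂ X₃ : Type*} [MeasurableSpace X₁] [MeasurableSpace X₂] [MeasurableSpace X₃]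
  {μ₁ : Measure X₁} {μ₂ : Measure X₂} {μ₃ : Measure X₃} [SFinite μ₁] [SFinite μ₂] [SFinite μ₃]
  {f : X₁ × X₂ × X₃ → ℝ≥0∞}

theorem lintegral_rpow_six_fifths_le_lintegral_lintegral (hf : Measurable f) :
    ∫⁻ z, f z ^ (6 / 5 : ℝ) ∂(μ₁.prod (μ₂.prod μ₃)) ≤
      ∫⁻ x₃, ∫⁻ x₂, (∫⁻ x₁, f (x₁, x₂, x₃) ^ (2 : ℝ) ∂μ₁) ^ (1 / 5 : ℝ) *
        (∫⁻ x₁, f (x₁, x₂, x₃) ∂μ₁) ^ (4 / 5 : ℝ) ∂μ₂ ∂μ₃ := by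
  rw [lintegral_prod_symm _ (by fun_prop), lintegral_prod_symm _ (by fun_prop)]
  refine lintegral_mono fun x₃ => lintegral_mono fun x₂ => ?_
  have h := lintegral_rpow_interpolate_le (μ := μ₁) (u := fun x₁ => f (x₁, x₂, x₃))
    (p := 2) (q := 1) (s := 1 / 5) (t := 4 / 5) (by fun_prop) (by norm_num) (by norm_num)
    (by norm_num) (by norm_num) (by norm_num)
  rw [show (1 / 5 : ℝ) * 2 + 4 / 5 * 1 = 6 / 5 by norm_num] at h
  simpa only [ENNReal.rpow_one] using h

theorem lintegral_rpow_half_lintegral_sq_lintegral_le (hf : Measurable f) :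
    ∫⁻ x₃, (∫⁻ x₂, (∫⁻ x₁, f (x₁, x₂, x₃) ∂μ₁) ^ (2 : ℝ) ∂μ₂) ^ (1 / 2 : ℝ) ∂μ₃ ≤
      ∫⁻ w : X₁ × X₃, (∫⁻ x₂, f (w.1, x₂, w.2) ^ (2 : ℝ) ∂μ₂) ^ (1 / 2 : ℝ) ∂(μ₁.prod μ₃) := by
  rw [lintegral_prod_symm _ (by fun_prop)]
  exact lintegral_mono fun x₃ => lintegral_lintegral_rpow_two_le (by fun_prop)

theorem rpow_half_lintegral_sq_lintegral_lintegral_le (hf : Measurable f) :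
    (∫⁻ x₃, (∫⁻ x₂, ∫⁻ x₁, f (x₁, x₂, x₃) ∂μ₁ ∂μ₂) ^ (2 : ℝ) ∂μ₃) ^ (1 / 2 : ℝ) ≤
      ∫⁻ w : X₁ × X₂, (∫⁻ x₃, f (w.1, w.2, x₃) ^ (2 : ℝ) ∂μ₃) ^ (1 / 2 : ℝ) ∂(μ₁.prod μ₂) := by
  have hprod : ∀ x₃, ∫⁻ x₂, ∫⁻ x₁, f (x₁, x₂, x₃) ∂μ₁ ∂μ₂ =
      ∫⁻ w : X₁ × X₂, f (w.1, w.2, x₃) ∂(μ₁.prod μ₂) :=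
    fun x₃ => (lintegral_prod_symm (fun w => f (w.1, w.2, x₃)) (by fun_prop)).symm
  simp_rw [hprod]
  exact lintegral_lintegral_rpow_two_le (F := fun (w : X₁ × X₂) x₃ => f (w.1, w.2, x₃))
    (by fun_prop)

theorem lintegral_rpow_six_fifths_le_mul_rpow (hf : Measurable f) :
    ∫⁻ z, f z ^ (6 / 5 : ℝ) ∂(μ₁.prod (μ₂.prod μ₃)) ≤
      ((∫⁻ w : X₂ × X₃, (∫⁻ x₁, f (x₁, w) ^ (2 : ℝ) ∂μ₁) ^ (1 / 2 : ℝ) ∂(μ₂.prod μ₃)) *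
        (∫⁻ w : X₁ × X₃, (∫⁻ x₂, f (w.1, x₂, w.2) ^ (2 : ℝ) ∂μ₂) ^ (1 / 2 : ℝ) ∂(μ₁.prod μ₃)) *
        (∫⁻ w : X₁ × X₂, (∫⁻ x₃, f (w.1, w.2, x₃) ^ (2 : ℝ) ∂μ₃) ^ (1 / 2 : ℝ) ∂(μ₁.prod μ₂)))
        ^ (2 / 5 : ℝ) := by
  refine (lintegral_rpow_six_fifths_le_lintegral_lintegral hf).trans <|
    (lintegral_lintegral_rpow_one_fifth_mul_rpow_four_fifths_le
      (a := fun w => ∫⁻ x₁, f (x₁, w) ^ (2 : ℝ) ∂μ₁) (g := fun w => ∫⁻ x₁, f (x₁, w) ∂μ₁)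
      (by fun_prop) (by fun_prop)).trans ?_
  gcongr (?_ * ?_ * ?_) ^ _
  · exact (lintegral_prod_symm _ (by fun_prop)).ge
  · exact lintegral_rpow_half_lintegral_sq_lintegral_le hf
  · exact rpow_half_lintegral_sq_lintegral_lintegral_le hf

end Blei

/-- Blei's 6/5 inequality (integral form): for σ-finite measure spaces
`(X₁,μ₁), (X₂,μ₂), (X₃,μ₃)` and a nonnegative measurable `f` on the product,
`(∫ f^{6/5})^{5/6} ≤ ∏_{i=1}^{3} [∫∫ (∫ f² dμ_i)^{1/2} dμ_j dμ_k]^{1/3}`,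
where in the `i`ᵗʰ factor the inner `L²` norm is in `x_i` and the outer `L¹` norm
is over the remaining two variables. -/
theorem blei_six_fifths {X₁ X₂ X₃ : Type*}
    [MeasurableSpace X₁] [MeasurableSpace X₂] [MeasurableSpace X₃]
    (μ₁ : Measure X₁) (μ₂ : Measure X₂) (μ₃ : Measure X₃)
    [SigmaFinite μ₁] [SigmaFinite μ₂] [SigmaFinite μ₃]
    (f : X₁ × X₂ × X₃ → ℝ≥0∞) (hf : Measurable f) :
    (∫⁻ z, f z ^ (6 / 5 : ℝ) ∂(μ₁.prod (μ₂.prod μ₃))) ^ (5 / 6 : ℝ) ≤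
      (∫⁻ w : X₂ × X₃, (∫⁻ x₁, f (x₁, w) ^ (2 : ℝ) ∂μ₁) ^ (1 / 2 : ℝ)
          ∂(μ₂.prod μ₃)) ^ (1 / 3 : ℝ) *
        (∫⁻ w : X₁ × X₃, (∫⁻ x₂, f (w.1, x₂, w.2) ^ (2 : ℝ) ∂μ₂) ^ (1 / 2 : ℝ)
          ∂(μ₁.prod μ₃)) ^ (1 / 3 : ℝ) *
        (∫⁻ w : X₁ × X₂, (∫⁻ x₃, f (w.1, w.2, x₃) ^ (2 : ℝ) ∂μ₃) ^ (1 / 2 : ℝ)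
          ∂(μ₁.prod μ₂)) ^ (1 / 3 : ℝ) := by
  refine (ENNReal.rpow_le_rpow (lintegral_rpow_six_fifths_le_mul_rpow hf) (by norm_num)).trans_eq ?_
  rw [← ENNReal.rpow_mul, show (2 / 5 : ℝ) * (5 / 6) = 1 / 3 by norm_num,
    ENNReal.mul_rpow_of_nonneg _ _ (by norm_num), ENNReal.mul_rpow_of_nonneg _ _ (by norm_num)]
end

section
/- Generalized Blei inequality with exponents 1 and 2: let J > K > 0 be integers, N = C(J,K), and let S₁,…,S_N enumerate the subsets of {1,…,J} of cardinality K, with ∼S_α = {1,…,J} \ S_α. For any σ-finite measure spaces (X₁,μ₁),…,(X_J,μ_J) and any measurable function f(x₁,…,x_J) on X₁ × ⋯ × X_J, (∫_{{1,…,J}} |f|^{2J/(K+J)})^{(K+J)/(2J)} ≤ ∏_{α=1}^{N} [ ∫_{S_α} ( ∫_{∼S_α} |f|² )^{1/2} ]^{1/N}, where for E ⊂ {1,…,J} the notation ∫_E denotes integration over the product space ∏_{k∈E} X_k with the product of the measures μ_k, k ∈ E. -/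
open MeasureTheory
open scoped ENNReal

/-- Combine a point of `∏_{j ∈ E} X j` and a point of `∏_{j ∈ Eᶜ} X j` into a point of
the full product `∏ j, X j`. -/
def glue {n : ℕ} {X : Fin n → Type*} (E : Finset (Fin n))
    (a : ∀ j : E, X j) (b : ∀ j : (Eᶜ : Finset (Fin n)), X j) : ∀ j, X j :=
  fun j => if h : j ∈ E then a ⟨j, h⟩ else b ⟨j, Finset.mem_compl.mpr h⟩

open Function Finset

/-!
Write `f ^ p = ∏_α f ^ (p / N)` with `p = 2J / (K + J)` and integrate out one coordinate at a
time. In coordinate `j`, Hölder's inequality with exponent `1` for the factors `α` with `j ∈ S α`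
and `2` for the others applies, because `j` lies in exactly `N K / J` of the sets `S α`. This
bounds `∫ f ^ p` by `∏_α ‖f‖_α ^ (p / N)`, where `‖·‖_α` takes the `L¹` or `L²` norm in one
coordinate after the other. Minkowski's integral inequality moves each `L¹` norm outside the `L²`
norms, so `‖f‖_α ≤ ∫_{S α} (∫_{∼S α} f²)^{1/2}`.
-/

section Minkowski

variable {A B : Type*} [MeasurableSpace A] [MeasurableSpace B] {μ : Measure A} {ν : Measure B}
  [SigmaFinite μ] [SigmaFinite ν]

theorem lintegral_lintegral_rpow_two_swap_le (h : A → B → ℝ≥0∞) (hh : Measurable (uncurry h)) :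
    (∫⁻ y, (∫⁻ x, h x y ∂μ) ^ (2 : ℝ) ∂ν) ^ (1 / 2 : ℝ) ≤
      ∫⁻ x, (∫⁻ y, h x y ^ (2 : ℝ) ∂ν) ^ (1 / 2 : ℝ) ∂μ := by
  have hx : ∀ x, Measurable (h x) := fun x => hh.comp measurable_prodMk_left
  have hy : ∀ y, Measurable fun x => h x y := fun y => hh.comp measurable_prodMk_right
  set R : A → ℝ≥0∞ := fun x => (∫⁻ y, h x y ^ (2 : ℝ) ∂ν) ^ (1 / 2 : ℝ)
  have hR : Measurable R := ((hh.pow_const _).lintegral_prod_right').pow_const _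
  have hcs : ∀ x x', ∫⁻ y, h x y * h x' y ∂ν ≤ R x * R x' := fun x x' => by
    simpa [R] using ENNReal.lintegral_mul_le_Lp_mul_Lq ν Real.HolderConjugate.two_two
      (hx x).aemeasurable (hx x').aemeasurable
  -- Expanding the square, instead of dividing by the `L²` norm, needs no finiteness.
  suffices ∫⁻ y, (∫⁻ x, h x y ∂μ) ^ (2 : ℝ) ∂ν ≤ (∫⁻ x, R x ∂μ) ^ (2 : ℝ) by
    have := ENNReal.rpow_le_rpow this (by norm_num : (0 : ℝ) ≤ 1 / 2)
    rwa [← ENNReal.rpow_mul, mul_one_div_cancel two_ne_zero, ENNReal.rpow_one] at this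
  calc ∫⁻ y, (∫⁻ x, h x y ∂μ) ^ (2 : ℝ) ∂ν
      = ∫⁻ y, ∫⁻ x, ∫⁻ x', h x y * h x' y ∂μ ∂μ ∂ν := by
        refine lintegral_congr fun y => ?_
        rw [ENNReal.rpow_two, sq, ← lintegral_mul_const _ (hy y)]
        exact lintegral_congr fun x => (lintegral_const_mul _ (hy y)).symm
    _ = ∫⁻ x, ∫⁻ x', ∫⁻ y, h x y * h x' y ∂ν ∂μ ∂μ := by
        have hprod : Measurable fun p : (B × A) × A => h p.1.2 p.1.1 * h p.2 p.1.1 := by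
          fun_prop
        rw [lintegral_lintegral_swap hprod.lintegral_prod_right'.aemeasurable]
        refine lintegral_congr fun x => lintegral_lintegral_swap ?_
        exact (hprod.comp
          ((measurable_fst.prodMk measurable_const).prodMk measurable_snd)).aemeasurable
    _ ≤ ∫⁻ x, ∫⁻ x', R x * R x' ∂μ ∂μ := by gcongr with x x'; exact hcs x x'
    _ = (∫⁻ x, R x ∂μ) ^ (2 : ℝ) := by
        simp_rw [lintegral_const_mul _ hR, lintegral_mul_const _ hR, ENNReal.rpow_two, sq]

end Minkowski

theorem Function.updateFinset_comm {ι : Type*} [DecidableEq ι] {π : ι → Type*} {s t : Finset ι}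
    (hst : Disjoint s t) (x : ∀ i, π i) (y : ∀ i : s, π i) (z : ∀ i : t, π i) :
    updateFinset (updateFinset x s y) t z = updateFinset (updateFinset x t z) s y := by
  ext i
  by_cases his : i ∈ s <;> by_cases hit : i ∈ t <;> simp [updateFinset, his, hit]
  exact (disjoint_left.mp hst his hit).elim

namespace MeasureTheory

variable {ι : Type*} [DecidableEq ι] {π : ι → Type*} [∀ i, MeasurableSpace (π i)]
  (μ : ∀ i, Measure (π i))

noncomputable def marginalLpNorm (p : ℝ) (s : Finset ι) (g : (∀ i, π i) → ℝ≥0∞) :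
    (∀ i, π i) → ℝ≥0∞ :=
  fun x => ((∫⋯∫⁻_s, (fun y => g y ^ p) ∂μ) x) ^ (1 / p)

variable {μ}

theorem marginalLpNorm_one (s : Finset ι) (g : (∀ i, π i) → ℝ≥0∞) :
    marginalLpNorm μ 1 s g = ∫⋯∫⁻_s, g ∂μ := by
  ext x
  simp [marginalLpNorm]

theorem marginalLpNorm_empty {p : ℝ} (hp : p ≠ 0) (g : (∀ i, π i) → ℝ≥0∞) :
    marginalLpNorm μ p ∅ g = g := by
  ext x
  simp [marginalLpNorm, ← ENNReal.rpow_mul, mul_inv_cancel₀ hp]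

theorem marginalLpNorm_mono {p : ℝ} (hp : 0 ≤ p) (s : Finset ι) {g g' : (∀ i, π i) → ℝ≥0∞}
    (hgg' : g ≤ g') : marginalLpNorm μ p s g ≤ marginalLpNorm μ p s g' := fun x =>
  ENNReal.rpow_le_rpow (lmarginal_mono (fun y => ENNReal.rpow_le_rpow (hgg' y) hp) x)
    (one_div_nonneg.mpr hp)

theorem lmarginal_prod_rpow_le {κ : Type*} (s : Finset ι) (A : Finset κ)
    {g : κ → (∀ i, π i) → ℝ≥0∞} (hg : ∀ α ∈ A, Measurable (g α)) {θ p : κ → ℝ}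
    (hθ : ∀ α ∈ A, 0 ≤ θ α) (hp : ∀ α ∈ A, 0 < p α) (hsum : ∑ α ∈ A, θ α / p α = 1) :
    ∫⋯∫⁻_s, (fun x => ∏ α ∈ A, g α x ^ θ α) ∂μ ≤
      fun x => ∏ α ∈ A, marginalLpNorm μ (p α) s (g α) x ^ θ α := by
  intro x
  calc ∫⁻ y, ∏ α ∈ A, g α (updateFinset x s y) ^ θ α ∂(Measure.pi fun i : s => μ i)
      = ∫⁻ y, ∏ α ∈ A, (g α (updateFinset x s y) ^ p α) ^ (θ α / p α)
          ∂(Measure.pi fun i : s => μ i) := by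
        refine lintegral_congr fun y => prod_congr rfl fun α hα => ?_
        rw [← ENNReal.rpow_mul, mul_div_cancel₀ _ (hp α hα).ne']
    _ ≤ ∏ α ∈ A, (∫⁻ y, g α (updateFinset x s y) ^ p α ∂(Measure.pi fun i : s => μ i)) ^
          (θ α / p α) :=
        ENNReal.lintegral_prod_norm_pow_le A
          (fun α hα => (((hg α hα).comp measurable_updateFinset).pow_const _).aemeasurable) hsum
          (fun α hα => div_nonneg (hθ α hα) (hp α hα).le)
    _ = ∏ α ∈ A, marginalLpNorm μ (p α) s (g α) x ^ θ α := by
        refine prod_congr rfl fun α _ => ?_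
        rw [marginalLpNorm, lmarginal, ← ENNReal.rpow_mul, one_div_mul_eq_div]

variable [∀ i, SigmaFinite (μ i)]

theorem Measurable.marginalLpNorm {p : ℝ} (s : Finset ι) {g : (∀ i, π i) → ℝ≥0∞}
    (hg : Measurable g) : Measurable (marginalLpNorm μ p s g) :=
  ((hg.pow_const p).lmarginal μ).pow_const _

theorem marginalLpNorm_marginalLpNorm {p : ℝ} (hp : p ≠ 0) {s t : Finset ι} (hst : Disjoint s t)
    {g : (∀ i, π i) → ℝ≥0∞} (hg : Measurable g) :
    marginalLpNorm μ p s (marginalLpNorm μ p t g) = marginalLpNorm μ p (s ∪ t) g := by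
  ext x
  simp only [marginalLpNorm, ← ENNReal.rpow_mul, one_div_mul_cancel hp, ENNReal.rpow_one,
    lmarginal_union μ _ (hg.pow_const p) hst]

theorem marginalLpNorm_two_marginalLpNorm_one_le {s t : Finset ι} (hst : Disjoint s t)
    {g : (∀ i, π i) → ℝ≥0∞} (hg : Measurable g) :
    marginalLpNorm μ 2 t (marginalLpNorm μ 1 s g) ≤
      marginalLpNorm μ 1 s (marginalLpNorm μ 2 t g) := by
  intro x
  simp only [marginalLpNorm_one]
  simp only [marginalLpNorm, lmarginal, updateFinset_comm hst.symm x]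
  exact lintegral_lintegral_rpow_two_swap_le _
    (hg.comp (measurable_updateFinset'.comp
      ((measurable_updateFinset.comp measurable_fst).prodMk measurable_snd)))

-- The head of the list is integrated first, i.e. innermost.
variable (μ) in
noncomputable def mixedLpNorm (p : ι → ℝ) :
    List ι → ((∀ i, π i) → ℝ≥0∞) → (∀ i, π i) → ℝ≥0∞
  | [], g => g
  | j :: L, g => mixedLpNorm p L (marginalLpNorm μ (p j) {j} g)

theorem lmarginal_prod_rpow_le_prod_mixedLpNorm {κ : Type*} (A : Finset κ) {θ : κ → ℝ}
    {p : κ → ι → ℝ} (hθ : ∀ α ∈ A, 0 ≤ θ α) (hp : ∀ α ∈ A, ∀ j, 0 < p α j) {L : List ι}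
    (hL : L.Nodup) (hsum : ∀ j ∈ L, ∑ α ∈ A, θ α / p α j = 1)
    {g : κ → (∀ i, π i) → ℝ≥0∞} (hg : ∀ α ∈ A, Measurable (g α)) :
    ∫⋯∫⁻_L.toFinset, (fun x => ∏ α ∈ A, g α x ^ θ α) ∂μ ≤
      fun x => ∏ α ∈ A, mixedLpNorm μ (p α) L (g α) x ^ θ α := by
  induction L generalizing g with
  | nil => simp [mixedLpNorm]
  | cons j L ih =>
    obtain ⟨hjL, hL⟩ := List.nodup_cons.mp hL
    have hprod : Measurable fun x => ∏ α ∈ A, g α x ^ θ α :=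
      Finset.measurable_prod _ fun α hα => (hg α hα).pow_const _
    rw [List.toFinset_cons, insert_eq, lmarginal_union' μ _ hprod
      (disjoint_singleton_left.mpr (by simpa using hjL))]
    calc ∫⋯∫⁻_L.toFinset, ∫⋯∫⁻_{j}, (fun x => ∏ α ∈ A, g α x ^ θ α) ∂μ ∂μ
        ≤ ∫⋯∫⁻_L.toFinset, (fun x => ∏ α ∈ A, marginalLpNorm μ (p α j) {j} (g α) x ^ θ α) ∂μ :=
          lmarginal_mono (lmarginal_prod_rpow_le _ A hg hθ (fun α hα => hp α hα j)
            (hsum j List.mem_cons_self))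
      _ ≤ _ := ih hL (fun j' hj' => hsum j' (List.mem_cons_of_mem _ hj'))
          (fun α hα => (hg α hα).marginalLpNorm _)

theorem mixedLpNorm_le_marginalLpNorm_one_marginalLpNorm_two (T : Finset ι) {L : List ι}
    (hL : L.Nodup) {g : (∀ i, π i) → ℝ≥0∞} (hg : Measurable g) :
    mixedLpNorm μ (fun j => if j ∈ T then 1 else 2) L g ≤
      marginalLpNorm μ 1 (L.toFinset ∩ T) (marginalLpNorm μ 2 (L.toFinset \ T) g) := by
  induction L generalizing g with
  | nil => simp [mixedLpNorm, marginalLpNorm_empty]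
  | cons j L ih =>
    obtain ⟨hjL, hL⟩ := List.nodup_cons.mp hL
    replace hjL : j ∉ L.toFinset := by simpa using hjL
    by_cases hjT : j ∈ T
    · have hj : Disjoint {j} (L.toFinset \ T) := by simp [hjT]
      calc mixedLpNorm μ _ (j :: L) g
          = mixedLpNorm μ _ L (marginalLpNorm μ 1 {j} g) := by simp [mixedLpNorm, hjT]
        _ ≤ marginalLpNorm μ 1 (L.toFinset ∩ T)
              (marginalLpNorm μ 2 (L.toFinset \ T) (marginalLpNorm μ 1 {j} g)) :=
            ih hL (hg.marginalLpNorm _)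
        _ ≤ marginalLpNorm μ 1 (L.toFinset ∩ T)
              (marginalLpNorm μ 1 {j} (marginalLpNorm μ 2 (L.toFinset \ T) g)) :=
            marginalLpNorm_mono zero_le_one _ (marginalLpNorm_two_marginalLpNorm_one_le hj hg)
        _ = _ := by
            rw [marginalLpNorm_marginalLpNorm one_ne_zero (by simp [hjL]) (hg.marginalLpNorm _),
              List.toFinset_cons, insert_inter_of_mem hjT, insert_sdiff_of_mem _ hjT, union_comm,
              ← insert_eq]
    · calc mixedLpNorm μ _ (j :: L) g
          = mixedLpNorm μ _ L (marginalLpNorm μ 2 {j} g) := by simp [mixedLpNorm, hjT]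
        _ ≤ marginalLpNorm μ 1 (L.toFinset ∩ T)
              (marginalLpNorm μ 2 (L.toFinset \ T) (marginalLpNorm μ 2 {j} g)) :=
            ih hL (hg.marginalLpNorm _)
        _ = _ := by
            rw [marginalLpNorm_marginalLpNorm two_ne_zero (by simp [hjL]) hg, List.toFinset_cons,
              insert_inter_of_notMem hjT, insert_sdiff_of_notMem _ hjT, union_comm, ← insert_eq]

theorem lintegral_prod_rpow_le_prod_marginalLpNorm [Fintype ι] {κ : Type*} (A : Finset κ)
    (T : κ → Finset ι) {θ : κ → ℝ} (hθ : ∀ α ∈ A, 0 ≤ θ α)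
    (hsum : ∀ j, ∑ α ∈ A, θ α / (if j ∈ T α then 1 else 2) = 1)
    {g : κ → (∀ i, π i) → ℝ≥0∞} (hg : ∀ α ∈ A, Measurable (g α)) (x : ∀ i, π i) :
    ∫⁻ y, ∏ α ∈ A, g α y ^ θ α ∂Measure.pi μ ≤
      ∏ α ∈ A, marginalLpNorm μ 1 (T α) (marginalLpNorm μ 2 (T α)ᶜ (g α)) x ^ θ α := by
  have hL : (univ : Finset ι).toList.toFinset = univ := toList_toFinset _
  calc ∫⁻ y, ∏ α ∈ A, g α y ^ θ α ∂Measure.pi μ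
      = (∫⋯∫⁻_(univ : Finset ι).toList.toFinset, (fun y => ∏ α ∈ A, g α y ^ θ α) ∂μ) x := by
        rw [hL, lintegral_eq_lmarginal_univ x]
    _ ≤ ∏ α ∈ A, mixedLpNorm μ (fun j => if j ∈ T α then 1 else 2) univ.toList (g α) x ^ θ α :=
        lmarginal_prod_rpow_le_prod_mixedLpNorm A hθ (fun α _ j => by split_ifs <;> norm_num)
          (nodup_toList _) (fun j _ => hsum j) hg x
    _ ≤ _ := prod_le_prod' fun α hα => ENNReal.rpow_le_rpow (by
        simpa [hL, compl_eq_univ_sdiff] using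
          mixedLpNorm_le_marginalLpNorm_one_marginalLpNorm_two (T α) (nodup_toList univ)
            (hg α hα) x) (hθ α hα)

end MeasureTheory

theorem Finset.card_filter_mem_powersetCard_mul_card {α : Type*} [DecidableEq α] {s : Finset α}
    {a : α} (ha : a ∈ s) (k : ℕ) :
    #{t ∈ powersetCard k s | a ∈ t} * #s = #(powersetCard k s) * k := by
  cases k with
  | zero => simp [powersetCard_zero]
  | succ k =>
    have hcount : #{t ∈ powersetCard (k + 1) s | a ∈ t} = #(powersetCard k (s.erase a)) := by
      refine card_nbij' (fun t => t.erase a) (insert a) ?_ ?_ ?_ ?_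
      · intro t ht
        simp only [coe_filter, mem_powersetCard, Set.mem_ofPred_eq] at ht
        simp [mem_powersetCard, erase_subset_erase a ht.1.1, card_erase_of_mem ht.2, ht.1.2]
      · intro t ht
        simp only [mem_coe, mem_powersetCard] at ht
        have hat : a ∉ t := fun h => by simpa using ht.1 h
        simp [mem_powersetCard, insert_subset ha (ht.1.trans (erase_subset a s)),
          card_insert_of_notMem hat, ht.2]
      · intro t ht
        simp only [coe_filter, Set.mem_ofPred_eq] at ht
        exact insert_erase ht.2
      · intro t ht
        simp only [mem_coe, mem_powersetCard] at ht
        exact erase_insert fun h => by simpa using ht.1 h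
    rw [hcount, card_powersetCard, card_powersetCard, card_erase_of_mem ha,
      ← Nat.sub_add_cancel (card_pos.mpr ⟨a, ha⟩), Nat.add_sub_cancel, mul_comm,
      Nat.add_one_mul_choose_eq]

theorem Finset.card_filter_comp_eq_of_forall_existsUnique {κ ι : Type*} [Fintype κ] [Fintype ι]
    [DecidableEq ι] {S : κ → Finset ι} {K : ℕ} (hcard : ∀ α, #(S α) = K)
    (henum : ∀ s : Finset ι, #s = K → ∃! α, S α = s) (P : Finset ι → Prop) [DecidablePred P] :
    #{α | P (S α)} = #{s ∈ powersetCard K univ | P s} := by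
  refine card_nbij S (fun α hα => ?_) (fun α _ β _ hαβ => ?_) (fun s hs => ?_)
  · simp_all
  · exact (henum _ (hcard β)).unique hαβ rfl
  · simp only [coe_filter, mem_powersetCard, subset_univ, true_and, Set.mem_ofPred_eq] at hs
    obtain ⟨α, hα, -⟩ := henum s hs.1
    exact ⟨α, by simpa [hα] using hs.2, hα⟩

theorem Finset.sum_div_ite_one_two {κ : Type*} (s : Finset κ) (P : κ → Prop) [DecidablePred P]
    (c : ℝ) : ∑ α ∈ s, c / (if P α then 1 else 2) = c / 2 * (#s + #{α ∈ s | P α}) := by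
  have hterm : ∀ α, c / (if P α then (1 : ℝ) else 2) = if P α then c else c / 2 := fun α => by
    split_ifs <;> simp
  rw [sum_congr rfl fun α _ => hterm α, sum_ite, sum_const, sum_const, nsmul_eq_mul, nsmul_eq_mul,
    ← card_filter_add_card_filter_not (s := s) P]
  push_cast
  ring

theorem eq_choose_of_forall_existsUnique {J K N : ℕ} {S : Fin N → Finset (Fin J)}
    (hcard : ∀ α, #(S α) = K) (henum : ∀ s : Finset (Fin J), #s = K → ∃! α, S α = s) :
    N = J.choose K := by
  simpa using card_filter_comp_eq_of_forall_existsUnique hcard henum fun _ => True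

theorem sum_blei_weight_div_eq_one {J K N : ℕ} (hKJ : K < J) {S : Fin N → Finset (Fin J)}
    (hcard : ∀ α, #(S α) = K) (henum : ∀ s : Finset (Fin J), #s = K → ∃! α, S α = s)
    (j : Fin J) :
    ∑ α, (2 * J : ℝ) / (K + J) / N / (if j ∈ S α then 1 else 2) = 1 := by
  have hN := eq_choose_of_forall_existsUnique hcard henum
  have hcount : #{α | j ∈ S α} * J = N * K := by
    rw [card_filter_comp_eq_of_forall_existsUnique hcard henum (j ∈ ·)]
    simpa [hN] using card_filter_mem_powersetCard_mul_card (mem_univ j) K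
  have hJ : (0 : ℝ) < J := by exact_mod_cast (Nat.zero_le K).trans_lt hKJ
  have hKJ0 : (K : ℝ) + J ≠ 0 := by positivity
  have hN0 : (N : ℝ) ≠ 0 := by rw [hN]; exact_mod_cast (Nat.choose_pos hKJ.le).ne'
  rw [sum_div_ite_one_two, card_univ, Fintype.card_fin]
  field_simp
  linear_combination (by exact_mod_cast hcount : (#{α | j ∈ S α} : ℝ) * J = N * K)

theorem glue_eq_updateFinset {n : ℕ} {X : Fin n → Type*} (E : Finset (Fin n))
    (a : ∀ j : E, X j) (b : ∀ j : (Eᶜ : Finset (Fin n)), X j) (x : ∀ j, X j) :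
    glue E a b = updateFinset (updateFinset x E a) Eᶜ b := by
  ext j
  by_cases hj : j ∈ E <;> simp [glue, updateFinset, hj]

theorem lintegral_glue_eq_marginalLpNorm {n : ℕ} {X : Fin n → Type*}
    [∀ j, MeasurableSpace (X j)] (μ : ∀ j, Measure (X j)) (E : Finset (Fin n))
    (g : (∀ j, X j) → ℝ≥0∞) (x : ∀ j, X j) :
    ∫⁻ a : ∀ j : E, X j,
        (∫⁻ b : ∀ j : (Eᶜ : Finset (Fin n)), X j, g (glue E a b) ^ (2 : ℝ)
          ∂(Measure.pi fun j : (Eᶜ : Finset (Fin n)) => μ j)) ^ (1 / 2 : ℝ)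
        ∂(Measure.pi fun j : E => μ j) =
      marginalLpNorm μ 1 E (marginalLpNorm μ 2 Eᶜ g) x := by
  simp [marginalLpNorm, lmarginal, glue_eq_updateFinset E _ _ x]

theorem blei_one_two_general {J K N : ℕ} (hKJ : K < J)
    (S : Fin N → Finset (Fin J)) (hcard : ∀ α, (S α).card = K)
    (henum : ∀ s : Finset (Fin J), s.card = K → ∃! α : Fin N, S α = s)
    {X : Fin J → Type*} [∀ j, MeasurableSpace (X j)]
    (μ : ∀ j, Measure (X j)) [∀ j, SigmaFinite (μ j)]
    (f : (∀ j, X j) → ℝ≥0∞) (hf : Measurable f) :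
    (∫⁻ x, f x ^ ((2 * J : ℝ) / ((K : ℝ) + J)) ∂(Measure.pi μ)) ^
        (((K : ℝ) + J) / (2 * J : ℝ)) ≤
      ∏ α : Fin N,
        (∫⁻ a : ∀ j : S α, X j,
            (∫⁻ b : ∀ j : ((S α)ᶜ : Finset (Fin J)), X j,
                f (glue (S α) a b) ^ (2 : ℝ)
              ∂(Measure.pi fun j : ((S α)ᶜ : Finset (Fin J)) => μ j)) ^ (1 / 2 : ℝ)
          ∂(Measure.pi fun j : S α => μ j)) ^ ((1 : ℝ) / N) := by
  set p : ℝ := (2 * J : ℝ) / ((K : ℝ) + J)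
  have hJ : (0 : ℝ) < J := by exact_mod_cast (Nat.zero_le K).trans_lt hKJ
  have hp : 0 < p := by positivity
  have hN0 : (N : ℝ) ≠ 0 := by
    rw [eq_choose_of_forall_existsUnique hcard henum]
    exact_mod_cast (Nat.choose_pos hKJ.le).ne'
  rcases isEmpty_or_nonempty (∀ j, X j) with hX | ⟨⟨x⟩⟩
  · rw [lintegral_of_isEmpty, ENNReal.zero_rpow_of_pos (by positivity)]
    exact zero_le
  have hsplit : ∀ y, f y ^ p = ∏ _α : Fin N, f y ^ (p / N) := fun y => by
    rw [prod_const, card_univ, Fintype.card_fin, ← ENNReal.rpow_natCast, ← ENNReal.rpow_mul,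
      div_mul_cancel₀ _ hN0]
  calc (∫⁻ y, f y ^ p ∂Measure.pi μ) ^ (((K : ℝ) + J) / (2 * J : ℝ))
      = (∫⁻ y, ∏ _α : Fin N, f y ^ (p / N) ∂Measure.pi μ) ^ p⁻¹ := by
        simp_rw [hsplit, p, inv_div]
    _ ≤ (∏ α : Fin N, marginalLpNorm μ 1 (S α) (marginalLpNorm μ 2 (S α)ᶜ f) x ^ (p / N)) ^ p⁻¹ :=
        ENNReal.rpow_le_rpow (lintegral_prod_rpow_le_prod_marginalLpNorm univ S
          (fun _ _ => by positivity) (sum_blei_weight_div_eq_one hKJ hcard henum)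
          (fun _ _ => hf) x) (by positivity)
    _ = ∏ α : Fin N, marginalLpNorm μ 1 (S α) (marginalLpNorm μ 2 (S α)ᶜ f) x ^ ((1 : ℝ) / N) := by
        rw [← ENNReal.prod_rpow_of_nonneg (by positivity)]
        refine prod_congr rfl fun α _ => ?_
        rw [← ENNReal.rpow_mul]
        field_simp
    _ = _ := by simp_rw [lintegral_glue_eq_marginalLpNorm μ _ f x]

/-- Generalized Blei inequality with exponents 1 and 2: with `S₁, …, S_N` enumerating
the `K`-element subsets of `{1, …, J}` (`N = C(J,K)`, `0 < K < J`),
`(∫ |f|^{2J/(K+J)})^{(K+J)/(2J)} ≤ ∏_α [∫_{S_α} (∫_{∼S_α} |f|²)^{1/2}]^{1/N}`,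
where `∫_E` denotes integration over `∏_{k ∈ E} X_k` with the product measure. -/
theorem blei_one_two {J K N : ℕ} (hK : 0 < K) (hKJ : K < J) (hN : N = J.choose K)
    (S : Fin N → Finset (Fin J)) (hcard : ∀ α, (S α).card = K)
    (henum : ∀ s : Finset (Fin J), s.card = K → ∃! α : Fin N, S α = s)
    {X : Fin J → Type*} [∀ j, MeasurableSpace (X j)]
    (μ : ∀ j, Measure (X j)) [∀ j, SigmaFinite (μ j)]
    (f : (∀ j, X j) → ℝ≥0∞) (hf : Measurable f) :
    (∫⁻ x, f x ^ ((2 * J : ℝ) / ((K : ℝ) + J)) ∂(Measure.pi μ)) ^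
        (((K : ℝ) + J) / (2 * J : ℝ)) ≤
      ∏ α : Fin N,
        (∫⁻ a : ∀ j : S α, X j,
            (∫⁻ b : ∀ j : ((S α)ᶜ : Finset (Fin J)), X j,
                f (glue (S α) a b) ^ (2 : ℝ)
              ∂(Measure.pi fun j : ((S α)ᶜ : Finset (Fin J)) => μ j)) ^ (1 / 2 : ℝ)
          ∂(Measure.pi fun j : S α => μ j)) ^ ((1 : ℝ) / N) :=
  blei_one_two_general hKJ S hcard henum μ f hf
end
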